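/- arXiv:hep-th/0502138 — 4 statements merged into one kernel-verified Lean document; each statement's English description precedes it below -/
import Mathlib

section
/- Let σ ⊂ ℚ^N be a strongly convex N-dimensional rational polyhedral cone, σ' ⊂ ℚ^n a convex rational n-dimensional cone, and π : ℚ^N → ℚ^n a linear map with π(σ) = σ'. Then σ' equals the union of the images π(τ) over all n-dimensional faces τ of σ. -/
/-- The finitely generated convex cone on a set `T`: all nonnegative rational
combinations of elements of `T`. -/
def ConeGen {V : Type*} [AddCommGroup V] [Module ℚ V] (T : Set V) : Set V :=
  {x | ∃ (s : Finset V) (c : V → ℚ), ↑s ⊆ T ∧ (∀ v, 0 ≤ c v) ∧ x = ∑ v ∈ s, c v • v}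

/-- A (rational) polyhedral cone: the cone generated by finitely many vectors. -/
def IsPolyCone {V : Type*} [AddCommGroup V] [Module ℚ V] (σ : Set V) : Prop :=
  ∃ T : Finset V, σ = ConeGen (↑T : Set V)

/-- A cone is strongly convex if it contains no line. -/
def IsStronglyConvex {V : Type*} [AddCommGroup V] [Module ℚ V] (σ : Set V) : Prop :=
  ∀ x ∈ σ, -x ∈ σ → x = 0

/-- The dimension of a cone: the dimension of its linear span. -/
noncomputable def coneDim {V : Type*} [AddCommGroup V] [Module ℚ V] (σ : Set V) : ℕ :=
  Module.finrank ℚ (Submodule.span ℚ σ)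

/-- `τ` is a face of `σ`: the intersection of `σ` with a supporting hyperplane
(including `σ` itself, via the zero functional). -/
def IsFace {V : Type*} [AddCommGroup V] [Module ℚ V] (σ τ : Set V) : Prop :=
  ∃ m : V →ₗ[ℚ] ℚ, (∀ x ∈ σ, 0 ≤ m x) ∧ τ = σ ∩ {x | m x = 0}

/-!
Among the faces of `σ` containing a preimage of a point of `σ'`, take one, `τ`, of least
dimension. If `π` were not injective on `span τ`, moving the preimage inside `τ` along a kernel
direction would, by strong convexity, reach a proper face of `τ`: a smaller face of `σ` still
containing a preimage. Hence `dim τ = dim π(τ) ≤ n`. The face poset of a polyhedral cone is graded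
(every proper face lies in a facet, as one sees from an irredundant halfspace description obtained
by Fourier–Motzkin elimination), so `τ` lies in a face of dimension exactly `n`.
-/

open Module Set Submodule Filter Topology

variable {V : Type*} [AddCommGroup V] [Module ℚ V]

section ConeGen

lemma coneGen_eq_hull (T : Set V) : ConeGen T = PointedCone.hull ℚ T := by
  refine Subset.antisymm ?_ fun x hx => ?_
  · rintro _ ⟨s, c, hs, hc, rfl⟩
    exact sum_mem fun v hv => smul_mem _ (⟨c v, hc v⟩ : {c : ℚ // 0 ≤ c}) (subset_span (hs hv))
  · obtain ⟨c, hcT, hc, rfl⟩ := PointedCone.mem_hull_set.1 hx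
    exact ⟨c.support, c, hcT, hc, rfl⟩

lemma subset_coneGen (T : Set V) : T ⊆ ConeGen T :=
  coneGen_eq_hull T ▸ PointedCone.subset_hull

lemma coneGen_mono {S T : Set V} (h : S ⊆ T) : ConeGen S ⊆ ConeGen T := by
  rw [coneGen_eq_hull, coneGen_eq_hull]
  exact SetLike.coe_subset_coe.2 (span_mono h)

lemma coneGen_subset_span (T : Set V) : ConeGen T ⊆ span ℚ T :=
  coneGen_eq_hull T ▸ PointedCone.hull_le_span ℚ T

lemma span_coneGen (T : Set V) : span ℚ (ConeGen T) = span ℚ T := by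
  rw [coneGen_eq_hull]
  exact span_span_of_tower _ _ _

lemma coneGen_empty : ConeGen (∅ : Set V) = {0} := by
  simp [coneGen_eq_hull]

lemma mem_coneGen_insert {a x : V} {T : Set V} :
    x ∈ ConeGen (insert a T) ↔ ∃ t : ℚ, 0 ≤ t ∧ x - t • a ∈ ConeGen T := by
  simp only [coneGen_eq_hull, SetLike.mem_coe, mem_span_insert]
  constructor
  · rintro ⟨⟨t, ht⟩, z, hz, rfl⟩
    exact ⟨t, ht, by simpa using hz⟩
  · rintro ⟨t, ht, hz⟩
    exact ⟨⟨t, ht⟩, _, hz, (add_sub_cancel _ x).symm⟩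

lemma sum_mem_coneGen (T : Finset V) : ∑ v ∈ T, v ∈ ConeGen (T : Set V) := by
  rw [coneGen_eq_hull]
  exact sum_mem fun v hv => subset_span hv

lemma nonneg_of_mem_coneGen {T : Set V} {ℓ : Dual ℚ V} (hℓ : ∀ v ∈ T, 0 ≤ ℓ v) {x : V}
    (hx : x ∈ ConeGen T) : 0 ≤ ℓ x := by
  obtain ⟨s, c, hs, hc, rfl⟩ := hx
  simp only [map_sum, map_smul, smul_eq_mul]
  exact Finset.sum_nonneg fun v hv => mul_nonneg (hc v) (hℓ v (hs hv))

lemma coneGen_inter_ker (T : Finset V) {m : Dual ℚ V} (hm : ∀ v ∈ T, 0 ≤ m v) :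
    ConeGen (T : Set V) ∩ {x | m x = 0} = ConeGen ({v ∈ T | m v = 0} : Finset V) := by
  refine Subset.antisymm ?_ fun x hx =>
    ⟨coneGen_mono (Finset.coe_subset.2 (Finset.filter_subset _ _)) hx, ?_⟩
  · rintro _ ⟨⟨s, c, hs, hc, rfl⟩, hx0⟩
    have hterm : ∀ v ∈ s, c v * m v = 0 := by
      simp only [mem_ofPred_eq, map_sum, map_smul, smul_eq_mul] at hx0
      exact (Finset.sum_eq_zero_iff_of_nonneg fun v hv => mul_nonneg (hc v) (hm v (hs hv))).1 hx0
    refine ⟨{v ∈ s | m v = 0}, c, fun v hv => ?_, hc,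
      (Finset.sum_filter_of_ne fun v hv hne => ?_).symm⟩
    · simp only [Finset.coe_filter, mem_ofPred_eq] at hv ⊢
      exact ⟨hs hv.1, hv.2⟩
    · exact (mul_eq_zero.1 (hterm v hv)).resolve_left fun h => hne (by simp [h])
  · have hker : span ℚ ({v ∈ T | m v = 0} : Finset V) ≤ LinearMap.ker m :=
      span_le.2 fun v hv => (Finset.mem_filter.1 (Finset.mem_coe.1 hv)).2
    exact hker (coneGen_subset_span _ hx)

lemma sum_pos_or_span_le_ker (T : Finset V) {ℓ : Dual ℚ V} (hℓ : ∀ v ∈ T, 0 ≤ ℓ v) :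
    0 < ℓ (∑ v ∈ T, v) ∨ span ℚ (T : Set V) ≤ LinearMap.ker ℓ := by
  by_cases h : ∃ v ∈ T, ℓ v ≠ 0
  · obtain ⟨v, hv, hv0⟩ := h
    rw [map_sum]
    exact Or.inl (Finset.sum_pos' hℓ ⟨v, hv, (hℓ v hv).lt_of_ne' hv0⟩)
  · exact Or.inr (span_le.2 fun v hv => not_not.1 fun hv0 => h ⟨v, hv, hv0⟩)

end ConeGen

section Halfspaces

def halfspaces (L : Set (Dual ℚ V)) : Set V :=
  {x | ∀ ℓ ∈ L, 0 ≤ ℓ x}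

/-- Fourier–Motzkin elimination of the direction `a`. -/
def fourierMotzkin (L : Set (Dual ℚ V)) (a : V) : Set (Dual ℚ V) :=
  {ℓ ∈ L | 0 ≤ ℓ a} ∪
    (fun p : Dual ℚ V × Dual ℚ V => p.2 a • p.1 - p.1 a • p.2) ''
      ({ℓ ∈ L | ℓ a < 0} ×ˢ {ℓ ∈ L | 0 < ℓ a})

lemma Set.Finite.fourierMotzkin {L : Set (Dual ℚ V)} (hL : L.Finite) (a : V) :
    (fourierMotzkin L a).Finite :=
  (hL.sep _).union (((hL.sep _).prod (hL.sep _)).image _)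

lemma exists_nonneg_between {A B : Set ℚ} (hA : A.Finite) (hAB : ∀ a ∈ A, ∀ b ∈ B, a ≤ b)
    (hB : ∀ b ∈ B, 0 ≤ b) : ∃ t, 0 ≤ t ∧ (∀ a ∈ A, a ≤ t) ∧ ∀ b ∈ B, t ≤ b := by
  obtain ⟨t, ht, hmax⟩ := exists_max_image (insert 0 A) id (hA.insert 0) (insert_nonempty 0 A)
  refine ⟨t, hmax 0 (mem_insert 0 A), fun a ha => hmax a (mem_insert_of_mem 0 ha), fun b hb => ?_⟩
  rcases ht with rfl | ht
  exacts [hB b hb, hAB t ht b hb]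

lemma mem_halfspaces_fourierMotzkin {L : Set (Dual ℚ V)} (hL : L.Finite) (a x : V) :
    x ∈ halfspaces (fourierMotzkin L a) ↔ ∃ t : ℚ, 0 ≤ t ∧ x - t • a ∈ halfspaces L := by
  constructor
  · intro hx
    have hpair : ∀ ℓ ∈ L, ℓ a < 0 → ∀ ℓ' ∈ L, 0 < ℓ' a → ℓ x / ℓ a ≤ ℓ' x / ℓ' a := by
      intro ℓ hℓ hℓa ℓ' hℓ' hℓ'a
      have := hx _ (Or.inr ⟨(ℓ, ℓ'), ⟨⟨hℓ, hℓa⟩, hℓ', hℓ'a⟩, rfl⟩)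
      simp only [LinearMap.sub_apply, LinearMap.smul_apply, smul_eq_mul, sub_nonneg] at this
      rw [div_le_iff_of_neg hℓa, div_mul_eq_mul_div, div_le_iff₀ hℓ'a]
      linarith
    obtain ⟨t, ht, hlow, hup⟩ := exists_nonneg_between
      (A := (fun ℓ => ℓ x / ℓ a) '' {ℓ ∈ L | ℓ a < 0})
      (B := (fun ℓ => ℓ x / ℓ a) '' {ℓ ∈ L | 0 < ℓ a}) ((hL.sep _).image _)
      (fun _ ⟨ℓ, ⟨hℓ, hℓa⟩, hℓx⟩ _ ⟨ℓ', ⟨hℓ', hℓ'a⟩, hℓ'x⟩ =>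
        hℓx ▸ hℓ'x ▸ hpair ℓ hℓ hℓa ℓ' hℓ' hℓ'a)
      (fun _ ⟨ℓ, ⟨hℓ, hℓa⟩, hℓx⟩ => hℓx ▸ div_nonneg (hx ℓ (Or.inl ⟨hℓ, hℓa.le⟩)) hℓa.le)
    refine ⟨t, ht, fun ℓ hℓ => ?_⟩
    rw [map_sub, map_smul, smul_eq_mul, sub_nonneg]
    rcases lt_trichotomy (ℓ a) 0 with hℓa | hℓa | hℓa
    · exact (div_le_iff_of_neg hℓa).1 (hlow _ ⟨ℓ, ⟨hℓ, hℓa⟩, rfl⟩)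
    · simpa [hℓa] using hx ℓ (Or.inl ⟨hℓ, hℓa.ge⟩)
    · exact (le_div_iff₀ hℓa).1 (hup _ ⟨ℓ, ⟨hℓ, hℓa⟩, rfl⟩)
  · rintro ⟨t, ht, hxt⟩ ℓ (⟨hℓ, hℓa⟩ | ⟨⟨ℓ₁, ℓ₂⟩, ⟨⟨hℓ₁, hℓ₁a⟩, hℓ₂, hℓ₂a⟩, rfl⟩)
    · have := hxt ℓ hℓ
      simp only [map_sub, map_smul, smul_eq_mul, sub_nonneg] at this
      nlinarith
    · have h₁ := hxt ℓ₁ hℓ₁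
      have h₂ := hxt ℓ₂ hℓ₂
      simp only [map_sub, map_smul, smul_eq_mul, sub_nonneg] at h₁ h₂
      simp only [LinearMap.sub_apply, LinearMap.smul_apply, smul_eq_mul, sub_nonneg]
      nlinarith

/-- The Minkowski–Weyl theorem, in the direction from generators to halfspaces. -/
theorem exists_halfspaces_eq_coneGen [FiniteDimensional ℚ V] (T : Finset V) :
    ∃ L : Set (Dual ℚ V), L.Finite ∧ ConeGen (T : Set V) = halfspaces L := by
  classical
  induction T using Finset.induction_on with
  | empty =>
    let b := Module.finBasis ℚ V
    refine ⟨range b.coord ∪ range (-b.coord ·), (finite_range _).union (finite_range _), ?_⟩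
    ext x
    simp only [Finset.coe_empty, coneGen_empty, mem_singleton_iff, halfspaces, mem_union,
      mem_range, mem_ofPred_eq]
    constructor
    · rintro rfl ℓ -
      simp
    · intro hx
      refine b.forall_coord_eq_zero_iff.1 fun i => le_antisymm ?_ (hx _ (Or.inl ⟨i, rfl⟩))
      simpa using hx _ (Or.inr ⟨i, rfl⟩)
  | insert a S _ ih =>
    obtain ⟨L, hL, hS⟩ := ih
    refine ⟨fourierMotzkin L a, hL.fourierMotzkin a, ?_⟩
    ext x
    rw [Finset.coe_insert, mem_coneGen_insert, mem_halfspaces_fourierMotzkin hL, hS]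

lemma IsPolyCone.exists_halfspaces [FiniteDimensional ℚ V] {σ : Set V} (hσ : IsPolyCone σ) :
    ∃ L : Set (Dual ℚ V), L.Finite ∧ σ = halfspaces L := by
  obtain ⟨T, rfl⟩ := hσ
  exact exists_halfspaces_eq_coneGen T

lemma exists_pos_forall_pos_add_smul {M : Set (Dual ℚ V)} (hM : M.Finite) {x : V}
    (hx : ∀ ℓ ∈ M, 0 < ℓ x) (w : V) : ∃ ε : ℚ, 0 < ε ∧ ∀ ℓ ∈ M, 0 < ℓ (x + ε • w) := by
  have h : ∀ᶠ ε in 𝓝 (0 : ℚ), ∀ ℓ ∈ M, 0 < ℓ (x + ε • w) := by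
    refine hM.eventually_all.2 fun ℓ hℓ => ?_
    have hlim : Tendsto (fun ε : ℚ => ℓ x + ε * ℓ w) (𝓝 0) (𝓝 (ℓ x)) := by
      simpa using
        (tendsto_const_nhds (x := ℓ x)).add ((tendsto_id (x := 𝓝 (0 : ℚ))).mul_const (ℓ w))
    simpa using hlim.eventually_const_lt (hx ℓ hℓ)
  obtain ⟨ε, hε, hεpos⟩ := ((h.filter_mono nhdsWithin_le_nhds).and self_mem_nhdsWithin).exists
    (f := 𝓝[>] (0 : ℚ))
  exact ⟨ε, hεpos, hε⟩

lemma exists_add_smul_mem_halfspaces_eq_zero {L : Set (Dual ℚ V)} (hL : L.Finite) {x v : V}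
    (hx : x ∈ halfspaces L) (hv : ∃ ℓ ∈ L, ℓ v < 0) :
    ∃ t : ℚ, ∃ ℓ ∈ L, ℓ v < 0 ∧ x + t • v ∈ halfspaces L ∧ ℓ (x + t • v) = 0 := by
  obtain ⟨ℓ₀, ⟨hℓ₀, hℓ₀v⟩, hmin⟩ :=
    exists_min_image {ℓ ∈ L | ℓ v < 0} (fun ℓ => ℓ x / -ℓ v) (hL.sep _) hv
  have ht : 0 ≤ ℓ₀ x / -ℓ₀ v := div_nonneg (hx ℓ₀ hℓ₀) (neg_nonneg.2 hℓ₀v.le)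
  refine ⟨ℓ₀ x / -ℓ₀ v, ℓ₀, hℓ₀, hℓ₀v, fun ℓ hℓ => ?_, ?_⟩
  · rw [map_add, map_smul, smul_eq_mul]
    rcases le_or_gt 0 (ℓ v) with hℓv | hℓv
    · exact add_nonneg (hx ℓ hℓ) (mul_nonneg ht hℓv)
    · have := (le_div_iff₀ (neg_pos.2 hℓv)).1 (hmin ℓ ⟨hℓ, hℓv⟩)
      linarith
  · rw [map_add, map_smul, smul_eq_mul, div_mul_eq_mul_div, div_neg, mul_div_assoc,
      div_self hℓ₀v.ne]
    ring

lemma exists_irredundant_subset {S σ : Set V} {L : Set (Dual ℚ V)} (hL : L.Finite)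
    (hσ : σ = S ∩ halfspaces L) :
    ∃ M ⊆ L, σ = S ∩ halfspaces M ∧
      ∀ ℓ ∈ M, ∃ y ∈ S, (∀ ℓ' ∈ M, ℓ' ≠ ℓ → 0 ≤ ℓ' y) ∧ ℓ y < 0 := by
  obtain ⟨M, ⟨hML, hM⟩, hmin⟩ :=
    (hL.finite_subsets.subset fun M (hM : M ⊆ L ∧ σ = S ∩ halfspaces M) => hM.1).exists_minimal
      ⟨L, subset_rfl, hσ⟩
  refine ⟨M, hML, hM, fun ℓ hℓ => ?_⟩
  by_contra! h
  have hdrop : σ = S ∩ halfspaces (M \ {ℓ}) := by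
    refine hM.trans (Subset.antisymm ?_ fun y ⟨hyS, hy⟩ => ⟨hyS, fun ℓ' hℓ' => ?_⟩)
    · exact fun y ⟨hyS, hy⟩ => ⟨hyS, fun ℓ' hℓ' => hy ℓ' hℓ'.1⟩
    · by_cases hℓ'ℓ : ℓ' = ℓ
      · exact hℓ'ℓ ▸ h y hyS fun ℓ'' hℓ'' hne => hy ℓ'' ⟨hℓ'', hne⟩
      · exact hy ℓ' ⟨hℓ', hℓ'ℓ⟩
  exact (hmin ⟨sdiff_subset.trans hML, hdrop⟩ sdiff_subset hℓ).2 rfl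

end Halfspaces

section Faces

lemma IsFace.subset {σ τ : Set V} (h : IsFace σ τ) : τ ⊆ σ := by
  obtain ⟨m, -, rfl⟩ := h
  exact inter_subset_left

lemma isFace_self (σ : Set V) : IsFace σ σ :=
  ⟨0, fun _ _ => le_rfl, by simp⟩

lemma IsFace.mono {σ F τ : Set V} (hτ : IsFace σ τ) (hF : F ⊆ σ) (hτF : τ ⊆ F) : IsFace F τ := by
  obtain ⟨m, hm, rfl⟩ := hτ
  exact ⟨m, fun x hx => hm x (hF hx),
    Subset.antisymm (subset_inter hτF inter_subset_right) (inter_subset_inter_left _ hF)⟩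

lemma IsFace.isPolyCone {σ τ : Set V} (hτ : IsFace σ τ) (hσ : IsPolyCone σ) : IsPolyCone τ := by
  obtain ⟨T, rfl⟩ := hσ
  obtain ⟨m, hm, rfl⟩ := hτ
  exact ⟨_, coneGen_inter_ker T fun v hv => hm v (subset_coneGen _ hv)⟩

lemma IsStronglyConvex.mono {σ τ : Set V} (hσ : IsStronglyConvex σ) (h : τ ⊆ σ) :
    IsStronglyConvex τ :=
  fun x hx hnx => hσ x (h hx) (h hnx)

/-- Faces of polyhedral cones compose: `ρ = τ ∩ ker m'` is cut out of `σ` by `m' + C • m`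
for `C` large enough to make this functional positive on the generators of `σ` outside `τ`. -/
theorem IsFace.trans {σ τ ρ : Set V} (hσ : IsPolyCone σ) (hτ : IsFace σ τ) (hρ : IsFace τ ρ) :
    IsFace σ ρ := by
  obtain ⟨T, rfl⟩ := hσ
  obtain ⟨m, hm, rfl⟩ := hτ
  obtain ⟨m', hm', rfl⟩ := hρ
  have hmT : ∀ v ∈ T, 0 ≤ m v := fun v hv => hm v (subset_coneGen _ hv)
  obtain ⟨C, hC⟩ := (T.finite_toSet.image fun v => -m' v / m v).bddAbove
  have hgen : ∀ v ∈ T, 0 ≤ (m' + (C + 1) • m) v ∧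
      ((m' + (C + 1) • m) v = 0 ↔ m v = 0 ∧ m' v = 0) := by
    intro v hv
    simp only [LinearMap.add_apply, LinearMap.smul_apply, smul_eq_mul]
    rcases (hmT v hv).eq_or_lt with hmv | hmv
    · have : 0 ≤ m' v := hm' v ⟨subset_coneGen _ hv, hmv.symm⟩
      simp [← hmv, this]
    · have hpos : 0 < m' v + (C + 1) * m v := by
        have := (div_le_iff₀ hmv).1 (hC (mem_image_of_mem _ hv))
        linarith
      exact ⟨hpos.le, iff_of_false hpos.ne' fun h => hmv.ne' h.1⟩
  refine ⟨m' + (C + 1) • m, fun x => nonneg_of_mem_coneGen fun v hv => (hgen v hv).1, ?_⟩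
  rw [coneGen_inter_ker T hmT, coneGen_inter_ker T fun v hv => (hgen v hv).1,
    coneGen_inter_ker {v ∈ T | m v = 0} fun v hv =>
      hm' v ⟨subset_coneGen _ (Finset.filter_subset _ _ hv), (Finset.mem_filter.1 hv).2⟩,
    Finset.filter_filter]
  congr 2
  exact Finset.filter_congr fun v hv => (hgen v hv).2.symm

end Faces

section Dimension

lemma coneDim_mono [FiniteDimensional ℚ V] {σ τ : Set V} (h : τ ⊆ σ) : coneDim τ ≤ coneDim σ :=
  finrank_mono (span_mono h)

lemma coneDim_image_le {W : Type*} [AddCommGroup W] [Module ℚ W] [FiniteDimensional ℚ V]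
    (π : V →ₗ[ℚ] W) (σ : Set V) : coneDim (π '' σ) ≤ coneDim σ := by
  rw [coneDim, ← map_span]
  exact finrank_map_le π _

lemma exists_mem_span_ne_zero_map_eq_zero {W : Type*} [AddCommGroup W] [Module ℚ W]
    [FiniteDimensional ℚ V] {π : V →ₗ[ℚ] W} {σ : Set V} (h : coneDim (π '' σ) < coneDim σ) :
    ∃ v ∈ span ℚ σ, v ≠ 0 ∧ π v = 0 := by
  by_contra! hinj
  have : Function.Injective (π.domRestrict (span ℚ σ)) := by
    rw [← LinearMap.ker_eq_bot, eq_bot_iff]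
    intro v hv
    by_contra hv0
    exact hinj v v.2 (fun h => hv0 (Subtype.ext h)) hv
  rw [coneDim, coneDim, ← map_span, ← LinearMap.range_domRestrict,
    LinearMap.finrank_range_of_inj this] at h
  exact h.false

lemma coneDim_inter_ker_lt [FiniteDimensional ℚ V] {σ : Set V} {ℓ : Dual ℚ V} {v : V}
    (hv : v ∈ span ℚ σ) (hℓv : ℓ v ≠ 0) : coneDim (σ ∩ {x | ℓ x = 0}) < coneDim σ := by
  refine finrank_lt_finrank_of_lt ((span_mono inter_subset_left).lt_of_ne fun h => hℓv ?_)
  have hker : span ℚ (σ ∩ {x | ℓ x = 0}) ≤ LinearMap.ker ℓ := span_le.2 fun x hx => hx.2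
  exact hker (h ▸ hv)

lemma finrank_inf_ker_add_one [FiniteDimensional ℚ V] (W : Submodule ℚ V) {f : Dual ℚ V}
    {x : V} (hx : x ∈ W) (hfx : f x ≠ 0) :
    finrank ℚ (W ⊓ LinearMap.ker f : Submodule ℚ V) + 1 = finrank ℚ W := by
  have hf : f.domRestrict W ≠ 0 := fun h => hfx (LinearMap.congr_fun h ⟨x, hx⟩)
  rw [← map_comap_subtype, finrank_map_subtype_eq, ← LinearMap.ker_domRestrict]
  exact Module.Dual.finrank_ker_add_one_of_ne_zero hf

end Dimension

section Facets

lemma exists_forall_eq_zero_of_isFace_ne {T : Finset V} {W : Submodule ℚ V}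
    {M : Set (Dual ℚ V)} (hM : M.Finite) (hσ : ConeGen (T : Set V) = (W : Set V) ∩ halfspaces M)
    {τ : Set V} (hτ : IsFace (ConeGen (T : Set V)) τ) (hne : τ ≠ ConeGen (T : Set V)) :
    ∃ ℓ ∈ M, ∀ x ∈ τ, ℓ x = 0 := by
  obtain ⟨m, hm, rfl⟩ := hτ
  have hmT : ∀ v ∈ T, 0 ≤ m v := fun v hv => hm v (subset_coneGen _ hv)
  obtain ⟨p, hpT, hp⟩ : ∃ p ∈ T, 0 < m p := by
    by_contra! h
    have hker : span ℚ (T : Set V) ≤ LinearMap.ker m :=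
      span_le.2 fun v hv => le_antisymm (h v hv) (hmT v hv)
    exact hne (inter_eq_left.2 fun x hx => hker (coneGen_subset_span _ hx))
  by_contra! h
  rw [coneGen_inter_ker T hmT] at h
  set T₀ : Finset V := {v ∈ T | m v = 0}
  -- the sum of the generators of the face is positive on every `ℓ ∈ M`, so it can be pushed
  -- slightly against `p` without leaving `σ`, making `m` negative
  have hpos : ∀ ℓ ∈ M, 0 < ℓ (∑ v ∈ T₀, v) := fun ℓ hℓ =>
    (sum_pos_or_span_le_ker T₀ fun v hv =>
      (hσ ▸ subset_coneGen _ (Finset.filter_subset _ _ hv)).2 ℓ hℓ).resolve_right fun hker =>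
        let ⟨x, hx, hx0⟩ := h ℓ hℓ
        hx0 (hker (coneGen_subset_span _ hx))
  obtain ⟨ε, hε, hεM⟩ := exists_pos_forall_pos_add_smul hM hpos (-p)
  have hx₀ : ∑ v ∈ T₀, v ∈ ConeGen (T : Set V) ∩ {x | m x = 0} :=
    coneGen_inter_ker T hmT ▸ sum_mem_coneGen T₀
  have hmem : ∑ v ∈ T₀, v + ε • -p ∈ ConeGen (T : Set V) := by
    rw [hσ]
    exact ⟨add_mem (hσ ▸ hx₀.1).1 (smul_mem _ _ (neg_mem (hσ ▸ subset_coneGen _ hpT).1)),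
      fun ℓ hℓ => (hεM ℓ hℓ).le⟩
  have := hm _ hmem
  rw [map_add, map_smul, hx₀.2, map_neg, smul_eq_mul] at this
  nlinarith

lemma span_inter_ker_eq {W : Submodule ℚ V} {M : Set (Dual ℚ V)} (hM : M.Finite) {σ : Set V}
    (hσ : σ = (W : Set V) ∩ halfspaces M) {ℓ₀ : Dual ℚ V} {z : V} (hzW : z ∈ W) (hz₀ : ℓ₀ z = 0)
    (hz : ∀ ℓ ∈ M, ℓ ≠ ℓ₀ → 0 < ℓ z) :
    span ℚ (σ ∩ {x | ℓ₀ x = 0}) = W ⊓ LinearMap.ker ℓ₀ := by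
  have hzσ : z ∈ σ ∩ {x | ℓ₀ x = 0} := by
    refine ⟨hσ ▸ ⟨hzW, fun ℓ hℓ => ?_⟩, hz₀⟩
    rcases eq_or_ne ℓ ℓ₀ with rfl | hne
    exacts [hz₀.ge, (hz ℓ hℓ hne).le]
  refine le_antisymm (span_le.2 fun x ⟨hxσ, hx0⟩ => ⟨(hσ ▸ hxσ).1, hx0⟩) fun w ⟨hwW, hw0⟩ => ?_
  obtain ⟨ε, hε, hεM⟩ :=
    exists_pos_forall_pos_add_smul (hM.sdiff (t := {ℓ₀})) (fun ℓ hℓ => hz ℓ hℓ.1 hℓ.2) w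
  have hw0 : ℓ₀ w = 0 := hw0
  have hzw : z + ε • w ∈ σ ∩ {x | ℓ₀ x = 0} := by
    have hzw₀ : ℓ₀ (z + ε • w) = 0 := by simp [hz₀, hw0]
    refine ⟨hσ ▸ ⟨add_mem hzW (smul_mem _ _ hwW), fun ℓ hℓ => ?_⟩, hzw₀⟩
    rcases eq_or_ne ℓ ℓ₀ with rfl | hne
    exacts [hzw₀.ge, (hεM ℓ ⟨hℓ, hne⟩).le]
  have hw : w = ε⁻¹ • ((z + ε • w) - z) := by rw [add_sub_cancel_left, inv_smul_smul₀ hε.ne']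
  rw [hw]
  exact smul_mem _ _ (sub_mem (subset_span hzw) (subset_span hzσ))

variable [FiniteDimensional ℚ V]

theorem IsFace.exists_facet_superset {σ τ : Set V} (hσ : IsPolyCone σ) (hτ : IsFace σ τ)
    (hne : τ ≠ σ) : ∃ F, IsFace σ F ∧ τ ⊆ F ∧ coneDim F + 1 = coneDim σ := by
  obtain ⟨T, rfl⟩ := hσ
  obtain ⟨L, hL, hσL⟩ := exists_halfspaces_eq_coneGen T
  set W := span ℚ (T : Set V)
  obtain ⟨M, hML, hσM, hirr⟩ := exists_irredundant_subset hL (S := W) (σ := ConeGen T)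
    (by rw [← hσL]; exact (inter_eq_right.2 (coneGen_subset_span _)).symm)
  have hM := hL.subset hML
  have hMσ : ∀ ℓ ∈ M, ∀ x ∈ ConeGen (T : Set V), 0 ≤ ℓ x := fun ℓ hℓ x hx => (hσM ▸ hx).2 ℓ hℓ
  obtain ⟨ℓ₀, hℓ₀, hℓ₀τ⟩ := exists_forall_eq_zero_of_isFace_ne hM hσM hτ hne
  set x₀ := ∑ v ∈ T, v
  have hx₀W : x₀ ∈ W := coneGen_subset_span _ (sum_mem_coneGen T)
  have hx₀ : ∀ ℓ ∈ M, 0 < ℓ x₀ := fun ℓ hℓ =>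
    (sum_pos_or_span_le_ker T fun v hv => hMσ ℓ hℓ v (subset_coneGen _ hv)).resolve_right
      fun hker => by
        obtain ⟨_, hyW, -, hy⟩ := hirr ℓ hℓ
        exact hy.ne (hker hyW)
  obtain ⟨y, hyW, hyM, hy₀⟩ := hirr ℓ₀ hℓ₀
  -- the point where the segment from `x₀` to `y` crosses the wall `ℓ₀ = 0`
  set z := (-ℓ₀ y) • x₀ + ℓ₀ x₀ • y
  have hz₀ : ℓ₀ z = 0 := by
    simp only [z, map_add, map_smul, smul_eq_mul]
    ring
  have hz : ∀ ℓ ∈ M, ℓ ≠ ℓ₀ → 0 < ℓ z := fun ℓ hℓ hne => by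
    simp only [z, map_add, map_smul, smul_eq_mul]
    exact add_pos_of_pos_of_nonneg (mul_pos (neg_pos.2 hy₀) (hx₀ ℓ hℓ))
      (mul_nonneg (hx₀ ℓ₀ hℓ₀).le (hyM ℓ hℓ hne))
  have hzW : z ∈ W := add_mem (smul_mem _ _ hx₀W) (smul_mem _ _ hyW)
  refine ⟨ConeGen T ∩ {x | ℓ₀ x = 0}, ⟨ℓ₀, hMσ ℓ₀ hℓ₀, rfl⟩,
    fun x hx => ⟨hτ.subset hx, hℓ₀τ x hx⟩, ?_⟩
  rw [coneDim, coneDim, span_inter_ker_eq hM hσM hzW hz₀ hz, span_coneGen]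
  exact finrank_inf_ker_add_one W hx₀W (hx₀ ℓ₀ hℓ₀).ne'

theorem IsFace.exists_superset_coneDim_eq {σ τ : Set V} (hσ : IsPolyCone σ) (hτ : IsFace σ τ)
    {k : ℕ} (hτk : coneDim τ ≤ k) (hkσ : k ≤ coneDim σ) :
    ∃ F, IsFace σ F ∧ τ ⊆ F ∧ coneDim F = k := by
  induction h : coneDim σ - k generalizing σ with
  | zero => exact ⟨σ, isFace_self σ, hτ.subset, by omega⟩
  | succ d ih =>
    obtain ⟨F, hF, hτF, hFdim⟩ := hτ.exists_facet_superset hσ (by rintro rfl; omega)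
    obtain ⟨G, hG, hτG, hGk⟩ :=
      ih (hF.isPolyCone hσ) (hτ.mono hF.subset hτF) (by omega) (by omega)
    exact ⟨G, hF.trans hσ hG, hτG, hGk⟩

end Facets

section Descent

variable [FiniteDimensional ℚ V]

theorem exists_isFace_add_smul_mem_coneDim_lt {σ : Set V} (hσ : IsPolyCone σ)
    (hsc : IsStronglyConvex σ) {x v : V} (hx : x ∈ σ) (hv : v ∈ span ℚ σ) (hv0 : v ≠ 0) :
    ∃ τ, IsFace σ τ ∧ coneDim τ < coneDim σ ∧ ∃ t : ℚ, x + t • v ∈ τ := by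
  obtain ⟨L, hL, rfl⟩ := hσ.exists_halfspaces
  obtain ⟨s, hs⟩ : ∃ s : ℚ, ∃ ℓ ∈ L, ℓ (s • v) < 0 := by
    by_contra! h
    exact hv0 (hsc v (fun ℓ hℓ => by simpa using h 1 ℓ hℓ)
      fun ℓ hℓ => by simpa using h (-1) ℓ hℓ)
  obtain ⟨t, ℓ, hℓ, hℓv, hmem, hzero⟩ := exists_add_smul_mem_halfspaces_eq_zero hL hx hs
  refine ⟨halfspaces L ∩ {y | ℓ y = 0}, ⟨ℓ, fun y hy => hy ℓ hℓ, rfl⟩,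
    coneDim_inter_ker_lt hv fun h => by simp [h] at hℓv, t * s, ?_⟩
  rw [mul_smul]
  exact ⟨hmem, hzero⟩

theorem exists_isFace_mem_image_coneDim_le {W : Type*} [AddCommGroup W] [Module ℚ W]
    (π : V →ₗ[ℚ] W) {σ : Set V} (hσ : IsPolyCone σ) (hsc : IsStronglyConvex σ) {x : V}
    (hx : x ∈ σ) : ∃ τ, IsFace σ τ ∧ π x ∈ π '' τ ∧ coneDim τ ≤ coneDim (π '' τ) := by
  obtain ⟨τ, ⟨hτ, hxτ⟩, hmin⟩ := (measure coneDim).wf.has_min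
    {τ | IsFace σ τ ∧ π x ∈ π '' τ} ⟨σ, isFace_self σ, mem_image_of_mem π hx⟩
  refine ⟨τ, hτ, hxτ, not_lt.1 fun hlt => ?_⟩
  obtain ⟨v, hv, hv0, hπv⟩ := exists_mem_span_ne_zero_map_eq_zero hlt
  obtain ⟨y, hy, hπy⟩ := hxτ
  obtain ⟨τ', hτ', hdim, t, hyt⟩ :=
    exists_isFace_add_smul_mem_coneDim_lt (hτ.isPolyCone hσ) (hsc.mono hτ.subset) hy hv hv0
  exact hmin τ' ⟨hτ.trans hσ hτ', y + t • v, hyt, by simp [hπv, hπy]⟩ hdim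

end Descent

theorem cone_image_eq_union_eqdim_faces_general {N n : ℕ}
    (σ : Set (Fin N → ℚ)) (σ' : Set (Fin n → ℚ))
    (hσ : IsPolyCone σ) (hσsc : IsStronglyConvex σ)
    (hσ'dim : coneDim σ' = n)
    (π : (Fin N → ℚ) →ₗ[ℚ] (Fin n → ℚ)) (hπ : π '' σ = σ') :
    σ' = ⋃ τ ∈ {τ | IsFace σ τ ∧ coneDim τ = n}, π '' τ := by
  subst hπ
  refine Subset.antisymm ?_ (iUnion₂_subset fun τ hτ => image_mono hτ.1.subset)
  rintro _ ⟨x, hx, rfl⟩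
  obtain ⟨τ, hτ, hxτ, hτdim⟩ := exists_isFace_mem_image_coneDim_le π hσ hσsc hx
  have hτn : coneDim τ ≤ n := hσ'dim ▸ hτdim.trans (coneDim_mono (image_mono hτ.subset))
  have hnσ : n ≤ coneDim σ := hσ'dim ▸ coneDim_image_le π σ
  obtain ⟨F, hF, hτF, hFdim⟩ := hτ.exists_superset_coneDim_eq hσ hτn hnσ
  exact mem_biUnion ⟨hF, hFdim⟩ (image_mono hτF hxτ)

/-- If `σ ⊂ ℚ^N` is a strongly convex `N`-dimensional rational polyhedral cone,
`σ' ⊂ ℚ^n` an `n`-dimensional convex rational polyhedral cone and `π` a linear map with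
`π(σ) = σ'`, then `σ'` is the union of the images of the `n`-dimensional faces of `σ`. -/
theorem cone_image_eq_union_eqdim_faces {N n : ℕ}
    (σ : Set (Fin N → ℚ)) (σ' : Set (Fin n → ℚ))
    (hσ : IsPolyCone σ) (hσsc : IsStronglyConvex σ) (hσdim : coneDim σ = N)
    (hσ' : IsPolyCone σ') (hσ'dim : coneDim σ' = n)
    (π : (Fin N → ℚ) →ₗ[ℚ] (Fin n → ℚ)) (hπ : π '' σ = σ') :
    σ' = ⋃ τ ∈ {τ | IsFace σ τ ∧ coneDim τ = n}, π '' τ :=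
  cone_image_eq_union_eqdim_faces_general σ σ' hσ hσsc hσ'dim π hπ
end

section
/- Let A ⊂ ℚ^n be an affine hyperplane not through the origin, S ⊂ A a finite set, σ ⊂ ℚ^n an n-dimensional strongly convex polyhedral cone generated by a subset of S, π : ℚ^n → ℚ² a linear map, and σ₂ ⊂ ℚ² a 2-dimensional strongly convex cone with bounding rays τ₁, τ₂. Then σ ∩ π⁻¹(σ₂) is generated by elements of S if and only if σ ∩ π⁻¹(τ₁) and σ ∩ π⁻¹(τ₂) are both generated by elements of S. -/
namespace CG

variable {V : Type*} [AddCommGroup V] [Module ℚ V] {T U : Set V} {x y : V}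

lemma zero_mem (T : Set V) : (0:V) ∈ ConeGen T :=
  ⟨∅, fun _ => 0, by simp, fun _ => le_refl 0, by simp⟩

lemma mem_of_mem (h : x ∈ T) : x ∈ ConeGen T := by
  classical
  refine ⟨{x}, fun v => if v = x then 1 else 0, by simpa, ?_, by simp⟩
  intro v; by_cases h : v = x <;> simp [h]

lemma add_mem (hx : x ∈ ConeGen T) (hy : y ∈ ConeGen T) : x + y ∈ ConeGen T := by
  classical
  obtain ⟨s, c, hs, hc, rfl⟩ := hx
  obtain ⟨s', c', hs', hc', rfl⟩ := hy
  refine ⟨s ∪ s', fun v => (if v ∈ s then c v else 0) + (if v ∈ s' then c' v else 0),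
    ?_, ?_, ?_⟩
  · rw [Finset.coe_union]; exact Set.union_subset hs hs'
  · intro v
    have h1 : (0:ℚ) ≤ (if v ∈ s then c v else 0) := by by_cases h : v ∈ s <;> simp [h, hc v]
    have h2 : (0:ℚ) ≤ (if v ∈ s' then c' v else 0) := by by_cases h : v ∈ s' <;> simp [h, hc' v]
    dsimp only
    exact add_nonneg h1 h2
  · show _ = ∑ v ∈ s ∪ s', ((if v ∈ s then c v else 0) + (if v ∈ s' then c' v else 0)) • v
    symm
    simp only [add_smul, ite_smul, zero_smul, Finset.sum_add_distrib, Finset.sum_ite_mem,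
      Finset.union_inter_cancel_left, Finset.union_inter_cancel_right]

lemma smul_mem {a : ℚ} (ha : 0 ≤ a) (hx : x ∈ ConeGen T) : a • x ∈ ConeGen T := by
  obtain ⟨s, c, hs, hc, rfl⟩ := hx
  exact ⟨s, fun v => a * c v, hs, fun v => mul_nonneg ha (hc v),
    by rw [Finset.smul_sum]; exact Finset.sum_congr rfl fun v _ => by rw [smul_smul]⟩

lemma coneGen_mono (h : T ⊆ U) : ConeGen T ⊆ ConeGen U :=
  fun x ⟨s, c, hs, hc, he⟩ => ⟨s, c, hs.trans h, hc, he⟩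

lemma coneGen_subset (h : T ⊆ ConeGen U) : ConeGen T ⊆ ConeGen U := by
  classical
  rintro x ⟨s, c, hs, hc, rfl⟩
  induction s using Finset.induction with
  | empty => simpa using zero_mem U
  | @insert w s' hni ih =>
    rw [Finset.sum_insert hni]
    refine add_mem (smul_mem (hc w) (h (hs (by simp)))) (ih ?_)
    exact fun v hv => hs (by simp [hv])

lemma nonneg_on (g : V →ₗ[ℚ] ℚ) (h : ∀ t ∈ T, 0 ≤ g t) : ∀ x ∈ ConeGen T, 0 ≤ g x := by
  rintro x ⟨s, c, hs, hc, rfl⟩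
  rw [map_sum]
  refine Finset.sum_nonneg fun v hv => ?_
  rw [map_smul]
  exact mul_nonneg (hc v) (h v (hs hv))

lemma face_eq (g : V →ₗ[ℚ] ℚ) (h : ∀ t ∈ T, 0 ≤ g t) :
    ConeGen T ∩ {x | g x = 0} = ConeGen {t ∈ T | g t = 0} := by
  classical
  ext x
  constructor
  · rintro ⟨⟨s, c, hs, hc, rfl⟩, hx0⟩
    have hterm : ∀ v ∈ s, 0 ≤ c v * g v := fun v hv => mul_nonneg (hc v) (h v (hs hv))
    have hsum : ∑ v ∈ s, c v * g v = 0 := by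
      simpa [map_sum, map_smul, smul_eq_mul] using hx0
    have hz : ∀ v ∈ s, c v * g v = 0 := (Finset.sum_eq_zero_iff_of_nonneg hterm).mp hsum
    refine ⟨s.filter (fun v => g v = 0), c, ?_, hc, ?_⟩
    · intro v hv
      simp only [Finset.coe_filter, Set.mem_setOf_eq] at hv
      exact ⟨hs hv.1, hv.2⟩
    · rw [Finset.sum_filter]
      refine Finset.sum_congr rfl fun v hv => ?_
      by_cases hg : g v = 0
      · simp [hg]
      · have hcv : c v = 0 := by
          rcases mul_eq_zero.mp (hz v hv) with h' | h'
          · exact h'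
          · exact absurd h' hg
        simp [hg, hcv]
  · intro hx
    have h1 : x ∈ ConeGen T := coneGen_mono (fun t ht => ht.1) hx
    refine ⟨h1, le_antisymm ?_ (nonneg_on g h x h1)⟩
    obtain ⟨s, c, hs, hc, rfl⟩ := hx
    rw [map_sum]
    apply le_of_eq
    refine (Finset.sum_eq_zero fun v hv => ?_)
    have hv0 := (hs hv).2
    rw [map_smul, smul_eq_mul, hv0, mul_zero]


def mixSet (g : V →ₗ[ℚ] ℚ) (T : Set V) : Set V :=
  {w | ∃ a ∈ T, ∃ b ∈ T, 0 < g a ∧ g b < 0 ∧ w = g a • b - g b • a}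

lemma sum_update [DecidableEq V] (s : Finset V) (c : V → ℚ) {a : V} (ha : a ∈ s) (r : ℚ) :
    ∑ v ∈ s, (Function.update c a r) v • v = ∑ v ∈ s, c v • v + (r - c a) • a := by
  rw [← Finset.sum_erase_add s (fun v => Function.update c a r v • v) ha,
    ← Finset.sum_erase_add s (fun v => c v • v) ha]
  have h1 : ∑ v ∈ s.erase a, Function.update c a r v • v = ∑ v ∈ s.erase a, c v • v :=
    Finset.sum_congr rfl fun v hv => by rw [Function.update_of_ne (Finset.ne_of_mem_erase hv)]
  rw [h1, Function.update_self, sub_smul]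
  abel

lemma halfspace_aux (g : V →ₗ[ℚ] ℚ) (T : Set V) (N : ℕ) :
    ∀ (s : Finset V) (c : V → ℚ), ↑s ⊆ T → (∀ v, 0 ≤ c v) →
    (s.filter (fun t => c t ≠ 0 ∧ g t ≠ 0)).card ≤ N → 0 ≤ g (∑ v ∈ s, c v • v) →
    (∑ v ∈ s, c v • v) ∈ ConeGen ({t ∈ T | 0 ≤ g t} ∪ mixSet g T) := by
  classical
  induction N with
  | zero =>
    intro s c hs hc hcard hgx
    have hnob : ∀ b ∈ s, ¬(c b ≠ 0 ∧ g b ≠ 0) := by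
      intro b hb hcontra
      have : b ∈ s.filter (fun t => c t ≠ 0 ∧ g t ≠ 0) := Finset.mem_filter.mpr ⟨hb, hcontra⟩
      have := Finset.card_pos.mpr ⟨b, this⟩
      omega
    refine ⟨s.filter (fun v => 0 ≤ g v), c, ?_, hc, ?_⟩
    · intro v hv
      simp only [Finset.coe_filter, Set.mem_setOf_eq] at hv
      exact Or.inl ⟨hs hv.1, hv.2⟩
    · rw [Finset.sum_filter]
      refine Finset.sum_congr rfl fun v hv => ?_
      by_cases hg : 0 ≤ g v
      · simp [hg]
      · have : c v = 0 := by
          by_contra hcv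
          exact hnob v hv ⟨hcv, fun h0 => hg (le_of_eq h0.symm)⟩
        simp [hg, this]
  | succ N ih =>
    intro s c hs hc hcard hgx
    by_cases hbad : ∃ b ∈ s, c b ≠ 0 ∧ g b < 0
    · obtain ⟨b, hb, hcb0, hgb⟩ := hbad
      have hcb : 0 < c b := lt_of_le_of_ne (hc b) (Ne.symm hcb0)
      -- find a positive generator
      have hsum : g (∑ v ∈ s, c v • v) = ∑ v ∈ s, c v * g v := by
        rw [map_sum]; exact Finset.sum_congr rfl fun v _ => by rw [map_smul, smul_eq_mul]
      have hexa : ∃ a ∈ s, 0 < c a * g a := by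
        by_contra hcon
        push_neg at hcon
        have h1 : ∑ v ∈ s, c v * g v < 0 := by
          rw [← Finset.add_sum_erase _ _ hb]
          have h2 : ∑ v ∈ s.erase b, c v * g v ≤ 0 :=
            Finset.sum_nonpos fun v hv => hcon v (Finset.mem_of_mem_erase hv)
          have h3 : c b * g b < 0 := mul_neg_of_pos_of_neg hcb hgb
          linarith
        rw [hsum] at hgx; linarith
      obtain ⟨a, ha, hpos⟩ := hexa
      have hga : 0 < g a := by
        rcases le_or_gt (g a) 0 with h | h
        · nlinarith [hc a]
        · exact h
      have hca : 0 < c a := by nlinarith [hc a]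
      have hab : a ≠ b := fun h => absurd (h ▸ hga) (not_lt.mpr (le_of_lt hgb))
      set w : V := g a • b - g b • a with hw
      have hwmem : w ∈ mixSet g T := ⟨a, hs ha, b, hs hb, hga, hgb, rfl⟩
      have hgw : g w = 0 := by
        rw [hw, map_sub, map_smul, map_smul, smul_eq_mul, smul_eq_mul]; ring
      by_cases hcase : c b * (-g b) ≤ c a * g a
      · -- absorb b
        set t : ℚ := c b / g a with ht
        have htn : 0 ≤ t := div_nonneg (le_of_lt hcb) (le_of_lt hga)
        set c' : V → ℚ := Function.update (Function.update c b 0) a (c a + c b * g b / g a)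
          with hc'
        have hc'a : c' a = c a + c b * g b / g a := by
          rw [hc', Function.update_self]
        have hc'b : c' b = 0 := by
          rw [hc', Function.update_of_ne (Ne.symm hab), Function.update_self]
        have hc'other : ∀ v, v ≠ a → v ≠ b → c' v = c v := fun v hva hvb => by
          rw [hc', Function.update_of_ne hva, Function.update_of_ne hvb]
        have hc'nonneg : ∀ v, 0 ≤ c' v := by
          intro v
          by_cases hva : v = a
          · rw [hva, hc'a]
            have h' : -(c a) ≤ c b * g b / g a := (le_div_iff₀ hga).mpr (by nlinarith)
            linarith
          · by_cases hvb : v = b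
            · rw [hvb, hc'b]
            · rw [hc'other v hva hvb]; exact hc v
        have heq : ∑ v ∈ s, c' v • v = ∑ v ∈ s, c v • v - t • w := by
          have hga0 : g a ≠ 0 := ne_of_gt hga
          rw [hc', sum_update s _ ha, sum_update s c hb]
          have e1 : Function.update c b 0 a = c a := Function.update_of_ne hab 0 c
          rw [e1, ht, hw]
          match_scalars <;> field_simp <;> ring
        have hfilter : s.filter (fun v => c' v ≠ 0 ∧ g v ≠ 0) ⊆
            (s.filter (fun v => c v ≠ 0 ∧ g v ≠ 0)).erase b := by
          intro v hv
          rw [Finset.mem_filter] at hv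
          obtain ⟨hvs, hv1, hv2⟩ := hv
          have hvb : v ≠ b := fun h => hv1 (h ▸ hc'b)
          refine Finset.mem_erase.mpr ⟨hvb, Finset.mem_filter.mpr ⟨hvs, ?_, hv2⟩⟩
          by_cases hva : v = a
          · subst hva; exact ne_of_gt hca
          · rw [hc'other v hva hvb] at hv1; exact hv1
        have hcard' : (s.filter (fun v => c' v ≠ 0 ∧ g v ≠ 0)).card ≤ N := by
          have hbmem : b ∈ s.filter (fun v => c v ≠ 0 ∧ g v ≠ 0) :=
            Finset.mem_filter.mpr ⟨hb, hcb0, ne_of_lt hgb⟩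
          have := Finset.card_le_card hfilter
          have := Finset.card_erase_of_mem hbmem
          omega
        have hgy : 0 ≤ g (∑ v ∈ s, c' v • v) := by
          rw [heq, map_sub, map_smul, hgw, smul_eq_mul, mul_zero, sub_zero]
          exact hgx
        have hy := ih s c' hs hc'nonneg hcard' hgy
        have hx : ∑ v ∈ s, c v • v = (∑ v ∈ s, c' v • v) + t • w := by
          rw [heq]; abel
        rw [hx]
        exact add_mem hy (smul_mem htn (mem_of_mem (Or.inr hwmem)))
      · -- absorb a
        push_neg at hcase
        set t : ℚ := c a / (-g b) with ht
        have htn : 0 ≤ t := div_nonneg (le_of_lt hca) (by linarith)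
        set c' : V → ℚ := Function.update (Function.update c a 0) b (c b + c a * g a / g b)
          with hc'
        have hc'b : c' b = c b + c a * g a / g b := by
          rw [hc', Function.update_self]
        have hc'a : c' a = 0 := by
          rw [hc', Function.update_of_ne hab, Function.update_self]
        have hc'other : ∀ v, v ≠ a → v ≠ b → c' v = c v := fun v hva hvb => by
          rw [hc', Function.update_of_ne hvb, Function.update_of_ne hva]
        have hc'nonneg : ∀ v, 0 ≤ c' v := by
          intro v
          by_cases hvb : v = b
          · rw [hvb, hc'b]
            have h' : -(c b) ≤ c a * g a / g b := (le_div_iff_of_neg hgb).mpr (by nlinarith)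
            linarith
          · by_cases hva : v = a
            · rw [hva, hc'a]
            · rw [hc'other v hva hvb]; exact hc v
        have heq : ∑ v ∈ s, c' v • v = ∑ v ∈ s, c v • v - t • w := by
          have hgb0 : g b ≠ 0 := ne_of_lt hgb
          rw [hc', sum_update s _ hb, sum_update s c ha]
          have e1 : Function.update c a 0 b = c b := Function.update_of_ne (Ne.symm hab) 0 c
          rw [e1, ht, hw]
          match_scalars <;> field_simp <;> ring
        have hfilter : s.filter (fun v => c' v ≠ 0 ∧ g v ≠ 0) ⊆
            (s.filter (fun v => c v ≠ 0 ∧ g v ≠ 0)).erase a := by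
          intro v hv
          rw [Finset.mem_filter] at hv
          obtain ⟨hvs, hv1, hv2⟩ := hv
          have hva : v ≠ a := fun h => hv1 (h ▸ hc'a)
          refine Finset.mem_erase.mpr ⟨hva, Finset.mem_filter.mpr ⟨hvs, ?_, hv2⟩⟩
          by_cases hvb : v = b
          · subst hvb; exact hcb0
          · rw [hc'other v hva hvb] at hv1; exact hv1
        have hcard' : (s.filter (fun v => c' v ≠ 0 ∧ g v ≠ 0)).card ≤ N := by
          have hamem : a ∈ s.filter (fun v => c v ≠ 0 ∧ g v ≠ 0) :=
            Finset.mem_filter.mpr ⟨ha, ne_of_gt hca, ne_of_gt hga⟩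
          have := Finset.card_le_card hfilter
          have := Finset.card_erase_of_mem hamem
          omega
        have hgy : 0 ≤ g (∑ v ∈ s, c' v • v) := by
          rw [heq, map_sub, map_smul, hgw, smul_eq_mul, mul_zero, sub_zero]
          exact hgx
        have hy := ih s c' hs hc'nonneg hcard' hgy
        have hx : ∑ v ∈ s, c v • v = (∑ v ∈ s, c' v • v) + t • w := by
          rw [heq]; abel
        rw [hx]
        exact add_mem hy (smul_mem htn (mem_of_mem (Or.inr hwmem)))
    · -- no bad generator: direct
      push_neg at hbad
      refine ⟨s.filter (fun v => 0 ≤ g v), c, ?_, hc, ?_⟩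
      · intro v hv
        simp only [Finset.coe_filter, Set.mem_setOf_eq] at hv
        exact Or.inl ⟨hs hv.1, hv.2⟩
      · rw [Finset.sum_filter]
        refine Finset.sum_congr rfl fun v hv => ?_
        by_cases hg : 0 ≤ g v
        · simp [hg]
        · have : c v = 0 := by
            by_contra hcv
            exact absurd (hbad v hv hcv) (not_le.mpr (lt_of_not_ge hg))
          simp [hg, this]

lemma halfspace (g : V →ₗ[ℚ] ℚ) (T : Set V) :
    ConeGen T ∩ {x | 0 ≤ g x} = ConeGen ({t ∈ T | 0 ≤ g t} ∪ mixSet g T) := by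
  apply Set.eq_of_subset_of_subset
  · rintro x ⟨⟨s, c, hs, hc, rfl⟩, hgx⟩
    exact halfspace_aux g T _ s c hs hc le_rfl hgx
  · intro x hx
    constructor
    · refine coneGen_subset ?_ hx
      rintro w (⟨hw, _⟩ | ⟨a, ha, b, hb, hga, hgb, rfl⟩)
      · exact mem_of_mem hw
      · have hrw : g a • b - g b • a = g a • b + (-(g b)) • a := by
          rw [neg_smul, sub_eq_add_neg]
        rw [hrw]
        exact add_mem (smul_mem (le_of_lt hga) (mem_of_mem hb))
          (smul_mem (by linarith) (mem_of_mem ha))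
    · exact nonneg_on g (by
        rintro w (⟨_, hw⟩ | ⟨a, _, b, _, hga, hgb, rfl⟩)
        · exact hw
        · rw [map_sub, map_smul, map_smul, smul_eq_mul, smul_eq_mul]; nlinarith) x hx


lemma mixSet_sub (g : V →ₗ[ℚ] ℚ) (T : Set V) :
    mixSet g T ⊆ ConeGen T ∩ {x | g x = 0} := by
  rintro w ⟨a, ha, b, hb, hga, hgb, rfl⟩
  constructor
  · have hrw : g a • b - g b • a = g a • b + (-(g b)) • a := by
      rw [neg_smul, sub_eq_add_neg]
    rw [hrw]
    exact add_mem (smul_mem (le_of_lt hga) (mem_of_mem hb))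
      (smul_mem (by linarith) (mem_of_mem ha))
  · show g _ = 0
    rw [map_sub, map_smul, map_smul, smul_eq_mul, smul_eq_mul]; ring

/-- A 1-dimensional face of a strongly convex cone is a ray. -/
lemma ray_struct {σ τ : Set (Fin 2 → ℚ)} (W : Set (Fin 2 → ℚ)) (hσ : σ = ConeGen W)
    (hsc : IsStronglyConvex σ) (m : (Fin 2 → ℚ) →ₗ[ℚ] ℚ)
    (hτ : τ = σ ∩ {x | m x = 0}) (hdim : coneDim τ = 1) :
    ∃ v, v ∈ τ ∧ v ≠ 0 ∧ τ = {x | ∃ c : ℚ, 0 ≤ c ∧ x = c • v} := by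
  have hτσ : τ ⊆ σ := hτ ▸ Set.inter_subset_left
  -- a nonzero element
  have hv : ∃ v ∈ τ, v ≠ (0 : Fin 2 → ℚ) := by
    by_contra h
    push_neg at h
    have hbot : Submodule.span ℚ τ = ⊥ := Submodule.span_eq_bot.mpr h
    rw [coneDim, hbot, finrank_bot] at hdim
    omega
  obtain ⟨v, hvτ, hvne⟩ := hv
  have hspan : Submodule.span ℚ ({v} : Set (Fin 2 → ℚ)) = Submodule.span ℚ τ := by
    apply Submodule.eq_of_le_of_finrank_le
    · exact Submodule.span_mono (by simpa using hvτ)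
    · rw [finrank_span_singleton hvne]
      exact le_of_eq hdim
  have hmul : ∀ x ∈ τ, ∃ c : ℚ, x = c • v := by
    intro x hx
    have : x ∈ Submodule.span ℚ ({v} : Set (Fin 2 → ℚ)) := by
      rw [hspan]; exact Submodule.subset_span hx
    obtain ⟨c, hc⟩ := Submodule.mem_span_singleton.mp this
    exact ⟨c, hc.symm⟩
  refine ⟨v, hvτ, hvne, ?_⟩
  ext x
  constructor
  · intro hx
    obtain ⟨c, rfl⟩ := hmul x hx
    refine ⟨c, ?_, rfl⟩
    by_contra hcn
    push_neg at hcn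
    have hneg : -(c • v) ∈ σ := by
      have : -(c • v) = (-c) • v := by rw [neg_smul]
      rw [this, hσ]
      exact smul_mem (by linarith) (hσ ▸ hτσ hvτ)
    have := hsc _ (hτσ hx) hneg
    rw [smul_eq_zero] at this
    rcases this with h | h
    · exact absurd h (ne_of_lt hcn)
    · exact hvne h
  · rintro ⟨c, hc, rfl⟩
    rw [hτ]
    constructor
    · rw [hσ]; exact smul_mem hc (hσ ▸ hτσ hvτ)
    · show m (c • v) = 0
      have hmv : m v = 0 := (hτ ▸ hvτ).2
      rw [map_smul, smul_eq_mul, hmv, mul_zero]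


end CG

/-- Lemma (genbyborder, case (i)). Let `A ⊂ ℚ^n` be an affine hyperplane not through the
origin, `S ⊂ A` finite, `σ` an `n`-dimensional strongly convex polyhedral cone generated
by a subset of `S`, `π : ℚ^n → ℚ²` linear and `σ₂ ⊂ ℚ²` a 2-dimensional strongly convex
cone with bounding rays `τ₁`, `τ₂`. Then `σ ∩ π⁻¹(σ₂)` is generated by elements of `S`
iff both `σ ∩ π⁻¹(τ₁)` and `σ ∩ π⁻¹(τ₂)` are. -/
theorem genByBorder_two_dim {n : ℕ}
    (A : Set (Fin n → ℚ)) (f : (Fin n → ℚ) →ₗ[ℚ] ℚ) (cst : ℚ) (hcst : cst ≠ 0)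
    (hA : A = {x | f x = cst})
    (S : Set (Fin n → ℚ)) (hSfin : S.Finite) (hSA : S ⊆ A)
    (σ : Set (Fin n → ℚ)) (T : Set (Fin n → ℚ)) (hT : T ⊆ S) (hσ : σ = ConeGen T)
    (hsc : IsStronglyConvex σ) (hdim : coneDim σ = n)
    (π : (Fin n → ℚ) →ₗ[ℚ] (Fin 2 → ℚ))
    (σ₂ τ₁ τ₂ : Set (Fin 2 → ℚ))
    (hσ₂ : IsPolyCone σ₂) (hσ₂sc : IsStronglyConvex σ₂) (hσ₂dim : coneDim σ₂ = 2)
    (hτ₁ : IsFace σ₂ τ₁) (hτ₁dim : coneDim τ₁ = 1)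
    (hτ₂ : IsFace σ₂ τ₂) (hτ₂dim : coneDim τ₂ = 1) (hne : τ₁ ≠ τ₂)
    (hall : ∀ τ, IsFace σ₂ τ → coneDim τ = 1 → τ = τ₁ ∨ τ = τ₂) :
    (∃ T' ⊆ S, σ ∩ π ⁻¹' σ₂ = ConeGen T') ↔
      ((∃ T' ⊆ S, σ ∩ π ⁻¹' τ₁ = ConeGen T') ∧
       (∃ T' ⊆ S, σ ∩ π ⁻¹' τ₂ = ConeGen T')) := by
  obtain ⟨m₁, hm₁pos, hτ₁eq⟩ := hτ₁
  obtain ⟨m₂, hm₂pos, hτ₂eq⟩ := hτ₂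
  obtain ⟨W, hW⟩ := hσ₂
  obtain ⟨v₁, hv₁τ, hv₁ne, hray₁⟩ := CG.ray_struct (↑W) hW hσ₂sc m₁ hτ₁eq hτ₁dim
  obtain ⟨v₂, hv₂τ, hv₂ne, hray₂⟩ := CG.ray_struct (↑W) hW hσ₂sc m₂ hτ₂eq hτ₂dim
  have hv₁σ₂ : v₁ ∈ σ₂ := (hτ₁eq ▸ hv₁τ).1
  have hv₂σ₂ : v₂ ∈ σ₂ := (hτ₂eq ▸ hv₂τ).1
  have hm₁v₁ : m₁ v₁ = 0 := (hτ₁eq ▸ hv₁τ).2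
  have hm₂v₂ : m₂ v₂ = 0 := (hτ₂eq ▸ hv₂τ).2
  have hsmulσ₂ : ∀ (c : ℚ), 0 ≤ c → ∀ x ∈ σ₂, c • x ∈ σ₂ := by
    intro c hc x hx; rw [hW] at hx ⊢; exact CG.smul_mem hc hx
  have haddσ₂ : ∀ x ∈ σ₂, ∀ y ∈ σ₂, x + y ∈ σ₂ := by
    intro x hx y hy; rw [hW] at hx hy ⊢; exact CG.add_mem hx hy
  have hnm : ∀ a : ℚ, v₁ ≠ a • v₂ := by
    intro a ha
    rcases lt_trichotomy a 0 with h | h | h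
    · have hmem : -v₁ ∈ σ₂ := by
        rw [ha, ← neg_smul]
        exact hsmulσ₂ (-a) (by linarith) v₂ hv₂σ₂
      exact hv₁ne (hσ₂sc v₁ hv₁σ₂ hmem)
    · rw [h, zero_smul] at ha; exact hv₁ne ha
    · apply hne
      rw [hray₁, hray₂]
      ext x
      constructor
      · rintro ⟨c, hc, rfl⟩
        exact ⟨c * a, by positivity, by rw [ha, smul_smul]⟩
      · rintro ⟨c, hc, rfl⟩
        refine ⟨c / a, by positivity, ?_⟩
        rw [ha, smul_smul, div_mul_cancel₀ _ (ne_of_gt h)]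
  have hv₂ray : ∀ c : ℚ, v₂ = c • v₁ → False := by
    intro c hc
    have hc0 : c ≠ 0 := fun h => hv₂ne (by rw [hc, h, zero_smul])
    exact hnm c⁻¹ (by rw [hc, smul_smul, inv_mul_cancel₀ hc0, one_smul])
  have hind : LinearIndependent ℚ ![v₁, v₂] := by
    rw [linearIndependent_fin2]
    constructor
    · simpa using hv₂ne
    · intro a
      simp only [Matrix.cons_val_zero, Matrix.cons_val_one, Matrix.head_cons]
      exact (hnm a).symm
  have htop : Submodule.span ℚ ({v₁, v₂} : Set (Fin 2 → ℚ)) = ⊤ := by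
    have hr : Set.range ![v₁, v₂] = {v₁, v₂} := by
      ext x; simp [Fin.exists_fin_two, or_comm]
    have hcard : Fintype.card (Fin 2) = Module.finrank ℚ (Fin 2 → ℚ) := by
      simp [Module.finrank_fin_fun]
    have := hind.span_eq_top_of_card_eq_finrank hcard
    rw [hr] at this; exact this
  have hdecomp : ∀ x : Fin 2 → ℚ, ∃ a b : ℚ, a • v₁ + b • v₂ = x := by
    intro x
    have hx : x ∈ Submodule.span ℚ ({v₁, v₂} : Set (Fin 2 → ℚ)) := by
      rw [htop]; trivial
    exact Submodule.mem_span_pair.mp hx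
  have hm₁v₂ : 0 < m₁ v₂ := by
    rcases lt_or_eq_of_le (hm₁pos v₂ hv₂σ₂) with h | h
    · exact h
    · exfalso
      have hmem : v₂ ∈ τ₁ := by rw [hτ₁eq]; exact ⟨hv₂σ₂, h.symm⟩
      rw [hray₁] at hmem
      obtain ⟨c, _, hc⟩ := hmem
      exact hv₂ray c hc
  have hm₂v₁ : 0 < m₂ v₁ := by
    rcases lt_or_eq_of_le (hm₂pos v₁ hv₁σ₂) with h | h
    · exact h
    · exfalso
      have hmem : v₁ ∈ τ₂ := by rw [hτ₂eq]; exact ⟨hv₁σ₂, h.symm⟩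
      rw [hray₂] at hmem
      obtain ⟨c, _, hc⟩ := hmem
      exact hnm c hc
  have hchar : σ₂ = {x | 0 ≤ m₁ x ∧ 0 ≤ m₂ x} := by
    apply Set.eq_of_subset_of_subset
    · exact fun x hx => ⟨hm₁pos x hx, hm₂pos x hx⟩
    · rintro x ⟨h1, h2⟩
      obtain ⟨a, b, hab⟩ := hdecomp x
      have e1 : m₁ x = b * m₁ v₂ := by
        rw [← hab, map_add, map_smul, map_smul, smul_eq_mul, smul_eq_mul, hm₁v₁,
          mul_zero, zero_add]
      have e2 : m₂ x = a * m₂ v₁ := by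
        rw [← hab, map_add, map_smul, map_smul, smul_eq_mul, smul_eq_mul, hm₂v₂,
          mul_zero, add_zero]
      rw [e1] at h1
      rw [e2] at h2
      have hb : 0 ≤ b := by nlinarith
      have ha : 0 ≤ a := by nlinarith
      rw [← hab]
      exact haddσ₂ _ (hsmulσ₂ a ha v₁ hv₁σ₂) _ (hsmulσ₂ b hb v₂ hv₂σ₂)
  set g₁ := m₁.comp π with hg₁
  set g₂ := m₂.comp π with hg₂
  constructor
  · rintro ⟨T', hT'S, hTeq⟩
    have hT'mem : ∀ t ∈ T', π t ∈ σ₂ := by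
      intro t ht
      have : t ∈ σ ∩ π ⁻¹' σ₂ := by rw [hTeq]; exact CG.mem_of_mem ht
      exact this.2
    constructor
    · refine ⟨{t ∈ T' | g₁ t = 0}, fun t ht => hT'S ht.1, ?_⟩
      have hpre : σ ∩ π ⁻¹' τ₁ = (σ ∩ π ⁻¹' σ₂) ∩ {x | g₁ x = 0} := by
        rw [hτ₁eq]; ext x
        simp only [Set.mem_inter_iff, Set.mem_preimage, Set.mem_setOf_eq, hg₁,
          LinearMap.comp_apply]
        tauto
      rw [hpre, hTeq]
      exact CG.face_eq g₁ (fun t ht => hm₁pos _ (hT'mem t ht))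
    · refine ⟨{t ∈ T' | g₂ t = 0}, fun t ht => hT'S ht.1, ?_⟩
      have hpre : σ ∩ π ⁻¹' τ₂ = (σ ∩ π ⁻¹' σ₂) ∩ {x | g₂ x = 0} := by
        rw [hτ₂eq]; ext x
        simp only [Set.mem_inter_iff, Set.mem_preimage, Set.mem_setOf_eq, hg₂,
          LinearMap.comp_apply]
        tauto
      rw [hpre, hTeq]
      exact CG.face_eq g₂ (fun t ht => hm₂pos _ (hT'mem t ht))
  · rintro ⟨⟨T₁', hT₁S, hT₁eq⟩, ⟨T₂', hT₂S, hT₂eq⟩⟩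
    set U₁ : Set (Fin n → ℚ) := {t ∈ T | 0 ≤ g₁ t} ∪ CG.mixSet g₁ T with hU₁
    have step1 : σ ∩ {x | 0 ≤ g₁ x} = ConeGen U₁ := by
      rw [hσ]; exact CG.halfspace g₁ T
    set G : Set (Fin n → ℚ) := {u ∈ U₁ | 0 ≤ g₂ u} ∪ CG.mixSet g₂ U₁ with hG
    have hmain : σ ∩ π ⁻¹' σ₂ = ConeGen G := by
      have hsplit : σ ∩ π ⁻¹' σ₂ = (σ ∩ {x | 0 ≤ g₁ x}) ∩ {x | 0 ≤ g₂ x} := by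
        rw [hchar]; ext x
        simp only [Set.mem_inter_iff, Set.mem_preimage, Set.mem_setOf_eq, hg₁, hg₂,
          LinearMap.comp_apply]
        tauto
      rw [hsplit, step1]
      exact CG.halfspace g₂ U₁
    have hpre₁' : σ ∩ π ⁻¹' τ₁ = σ ∩ {x | g₁ x = 0 ∧ 0 ≤ g₂ x} := by
      rw [hτ₁eq, hchar]; ext x
      simp only [Set.mem_inter_iff, Set.mem_preimage, Set.mem_setOf_eq, hg₁, hg₂,
        LinearMap.comp_apply]
      constructor
      · rintro ⟨hx, ⟨_, h2⟩, h3⟩; exact ⟨hx, h3, h2⟩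
      · rintro ⟨hx, h3, h2⟩; exact ⟨hx, ⟨le_of_eq h3.symm, h2⟩, h3⟩
    have hpre₂' : σ ∩ π ⁻¹' τ₂ = σ ∩ {x | 0 ≤ g₁ x ∧ g₂ x = 0} := by
      rw [hτ₂eq, hchar]; ext x
      simp only [Set.mem_inter_iff, Set.mem_preimage, Set.mem_setOf_eq, hg₁, hg₂,
        LinearMap.comp_apply]
      constructor
      · rintro ⟨hx, ⟨h1, _⟩, h3⟩; exact ⟨hx, h1, h3⟩
      · rintro ⟨hx, h1, h3⟩; exact ⟨hx, ⟨h1, le_of_eq h3.symm⟩, h3⟩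
    refine ⟨{t ∈ T | 0 ≤ g₁ t ∧ 0 ≤ g₂ t} ∪ T₁' ∪ T₂', ?_, ?_⟩
    · rintro t ((⟨ht, _⟩ | ht) | ht)
      exacts [hT ht, hT₁S ht, hT₂S ht]
    · apply Set.eq_of_subset_of_subset
      · rw [hmain]
        apply CG.coneGen_subset
        rintro u (⟨hu, hg₂u⟩ | hu)
        · rcases hu with ⟨ht, hg₁t⟩ | hu
          · exact CG.mem_of_mem (Or.inl (Or.inl ⟨ht, hg₁t, hg₂u⟩))
          · have hm := CG.mixSet_sub g₁ T hu
            have huτ : u ∈ σ ∩ π ⁻¹' τ₁ := by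
              rw [hpre₁']
              exact ⟨hσ ▸ hm.1, hm.2, hg₂u⟩
            rw [hT₁eq] at huτ
            exact CG.coneGen_mono (fun z hz => Or.inl (Or.inr hz)) huτ
        · have hm := CG.mixSet_sub g₂ U₁ hu
          have h1 : u ∈ σ ∩ {x | 0 ≤ g₁ x} := step1 ▸ hm.1
          have huτ : u ∈ σ ∩ π ⁻¹' τ₂ := by
            rw [hpre₂']
            exact ⟨h1.1, h1.2, hm.2⟩
          rw [hT₂eq] at huτ
          exact CG.coneGen_mono (fun z hz => Or.inr hz) huτ
      · rw [hmain]
        apply CG.coneGen_subset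
        rw [← hmain]
        rintro t ((⟨ht, h1, h2⟩ | ht) | ht)
        · refine ⟨hσ ▸ CG.mem_of_mem ht, ?_⟩
          show π t ∈ σ₂
          rw [hchar]
          exact ⟨h1, h2⟩
        · have hmem : t ∈ σ ∩ π ⁻¹' τ₁ := by rw [hT₁eq]; exact CG.mem_of_mem ht
          refine ⟨hmem.1, ?_⟩
          show π t ∈ σ₂
          have := hmem.2
          rw [hτ₁eq] at this
          exact this.1
        · have hmem : t ∈ σ ∩ π ⁻¹' τ₂ := by rw [hT₂eq]; exact CG.mem_of_mem ht
          refine ⟨hmem.1, ?_⟩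
          show π t ∈ σ₂
          have := hmem.2
          rw [hτ₂eq] at this
          exact this.1
end

section
/- Let ∇ ⊂ N_ℝ be a reflexive polytope and v a vertex of ∇. Then for every nonzero linear functional m̂ ∈ M_ℝ with ⟨m̂, v⟩ = 0, there exists an edge θ* of ∇ containing v whose interior lies strictly in the open halfspace {n : ⟨m̂, n⟩ < 0}; i.e., there is a vertex w of ∇ adjacent to v with ⟨m̂, w⟩ < 0. -/
/-!
Let `l` expose the vertex `v` and tilt it towards `-f`, i.e. consider `l - t • f` for growing
`t ≥ 0`. Vertices with `f ≥ 0` stay strictly below the level of `v`, while a vertex `x` with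
`f x < 0` reaches that level exactly at `t = (l x - l v) / f x`. After perturbing `l` so that these
critical values are pairwise distinct, the vertex `w` reached first is the only one besides `v`
on the supporting hyperplane at the critical tilt, so that hyperplane exposes the edge `[v, w]`.
The perturbation exists because a tie between two vertices is a linear condition on `l` that
is nontrivial unless `v` and the two vertices are collinear on one ray, which extremality rules out.
-/

open Set Filter Topology

variable {E : Type*} [NormedAddCommGroup E] [NormedSpace ℝ E]

lemma exists_forall_lt_zero_and_ne_zero (T C : Finset E) (hC : ∀ c ∈ C, c ≠ 0)
    {l₀ : StrongDual ℝ E} (hT : ∀ t ∈ T, l₀ t < 0) :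
    ∃ l : StrongDual ℝ E, (∀ t ∈ T, l t < 0) ∧ ∀ c ∈ C, l c ≠ 0 := by
  classical
  induction C using Finset.induction_on with
  | empty => exact ⟨l₀, hT, by simp⟩
  | insert c C _ ih =>
    obtain ⟨l, hlT, hlC⟩ := ih fun c' hc' => hC c' (Finset.mem_insert_of_mem hc')
    obtain ⟨g, hg⟩ := SeparatingDual.exists_ne_zero (R := ℝ) (hC c (Finset.mem_insert_self c C))
    have hlim (x : E) : Tendsto (fun ε : ℝ => (l + ε • g) x) (𝓝[≠] 0) (𝓝 (l x)) := by
      have hcont : Continuous fun ε : ℝ => (l + ε • g) x := by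
        simp only [add_apply, smul_apply, smul_eq_mul]
        fun_prop
      simpa using (hcont.tendsto 0).mono_left nhdsWithin_le_nhds
    have hT' : ∀ᶠ ε in 𝓝[≠] (0 : ℝ), ∀ t ∈ T, (l + ε • g) t < 0 :=
      (eventually_all_finset T).2 fun t ht => (hlim t).eventually_lt_const (hlT t ht)
    have hC' : ∀ᶠ ε in 𝓝[≠] (0 : ℝ), ∀ c' ∈ C, (l + ε • g) c' ≠ 0 :=
      (eventually_all_finset C).2 fun c' hc' => (hlim c').eventually_ne (hlC c' hc')
    have hc : ∀ᶠ ε in 𝓝[≠] (0 : ℝ), (l + ε • g) c ≠ 0 := by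
      by_cases hlc : l c = 0
      · filter_upwards [self_mem_nhdsWithin] with ε hε
        simpa [hlc] using ⟨hε, hg⟩
      · exact (hlim c).eventually_ne hlc
    obtain ⟨ε, hεT, hεC, hεc⟩ := (hT'.and (hC'.and hc)).exists
    exact ⟨l + ε • g, hεT, Finset.forall_mem_insert _ _ _ |>.2 ⟨hεc, hεC⟩⟩

lemma smul_sub_ne_smul_sub_of_mem_extremePoints {P : Set E} {v x y : E} (hv : v ∈ P)
    (hx : x ∈ P.extremePoints ℝ) (hy : y ∈ P.extremePoints ℝ) (hxy : x ≠ y) {a b : ℝ}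
    (ha : 0 < a) (hb : 0 < b) : a • (x - v) ≠ b • (y - v) := by
  wlog hba : b ≤ a generalizing x y a b
  · exact fun h => this hy hx hxy.symm hb ha (le_of_not_ge hba) h.symm
  intro h
  rcases hba.eq_or_lt with rfl | hba
  · exact hxy (by simpa using smul_right_injective E hb.ne' h)
  have hseg : x ∈ openSegment ℝ v y := by
    rw [openSegment_eq_image']
    refine ⟨b / a, ⟨div_pos hb ha, (div_lt_one ha).2 hba⟩, ?_⟩
    show v + (b / a) • (y - v) = x
    rw [div_eq_inv_mul, mul_smul, ← h, smul_smul, inv_mul_cancel₀ ha.ne', one_smul,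
      add_sub_cancel]
  exact hxy ((mem_extremePoints.1 hx).2 v hv y hy.1 hseg).2.symm

lemma exists_strict_exposing_injOn {P : Set E} (V : Finset E) (hV : ↑V ⊆ P.extremePoints ℝ)
    {v : E} (hv : v ∈ P) {l₀ : StrongDual ℝ E} (hl₀ : ∀ x ∈ V, x ≠ v → l₀ x < l₀ v)
    (f : StrongDual ℝ E) :
    ∃ l : StrongDual ℝ E, (∀ x ∈ V, x ≠ v → l x < l v) ∧
      InjOn (fun x => (l x - l v) / f x) {x ∈ V | f x < 0} := by
  classical
  set D := {x ∈ V | f x < 0}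
  set T := (V.erase v).image (· - v)
  -- `l` annihilates the element of `C` indexed by `(x, y)` iff the two ratios agree.
  set C := D.offDiag.image fun p => f p.2 • (p.1 - v) - f p.1 • (p.2 - v)
  have hT : ∀ t ∈ T, l₀ t < 0 := by
    simp only [T, Finset.mem_image, Finset.mem_erase, forall_exists_index, and_imp]
    rintro _ x hxv hx rfl
    simpa using hl₀ x hx hxv
  have hC : ∀ c ∈ C, c ≠ 0 := by
    simp only [C, D, Finset.mem_image, Finset.mem_offDiag, Finset.mem_filter]
    rintro _ ⟨⟨x, y⟩, ⟨⟨hx, hfx⟩, ⟨hy, hfy⟩, hxy⟩, rfl⟩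
    have := smul_sub_ne_smul_sub_of_mem_extremePoints hv (hV hx) (hV hy) hxy
      (neg_pos.2 hfy) (neg_pos.2 hfx)
    rwa [neg_smul, neg_smul, Ne, neg_inj, ← sub_eq_zero] at this
  obtain ⟨l, hlT, hlC⟩ := exists_forall_lt_zero_and_ne_zero T C hC hT
  refine ⟨l, fun x hx hxv => ?_, fun x hx y hy hxy => ?_⟩
  · simpa using hlT (x - v) (Finset.mem_image_of_mem _ (Finset.mem_erase.2 ⟨hxv, hx⟩))
  · by_contra hne
    simp only [mem_ofPred_eq] at hx hy
    refine hlC _ (Finset.mem_image_of_mem _ (a := (x, y)) (Finset.mem_offDiag.2 ⟨?_, ?_, hne⟩)) ?_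
    · simpa [D] using hx
    · simpa [D] using hy
    rw [div_eq_div_iff hx.2.ne hy.2.ne] at hxy
    simp only [map_sub, map_smul, smul_eq_mul]
    linear_combination hxy

lemma exists_rotated_functional (V : Finset E) {v : E} {l f : StrongDual ℝ E}
    (hl : ∀ x ∈ V, x ≠ v → l x < l v) (hfv : f v = 0) (hD : ∃ x ∈ V, f x < 0)
    (hinj : InjOn (fun x => (l x - l v) / f x) {x ∈ V | f x < 0}) :
    ∃ w ∈ V, f w < 0 ∧ ∃ L : StrongDual ℝ E, L w = L v ∧ ∀ x ∈ V, x ≠ v → x ≠ w → L x < L v := by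
  classical
  set r := fun x => (l x - l v) / f x
  obtain ⟨w, hwD, hwmin⟩ := Finset.exists_min_image {x ∈ V | f x < 0} r
    (by simpa [Finset.Nonempty] using hD)
  obtain ⟨hwV, hfw⟩ := Finset.mem_filter.1 hwD
  have hwv : w ≠ v := by rintro rfl; exact hfw.ne hfv
  have hrw : 0 < r w := div_pos_of_neg_of_neg (sub_neg.2 (hl w hwV hwv)) hfw
  refine ⟨w, hwV, hfw, l - r w • f, ?_, fun x hx hxv hxw => ?_⟩
  · simp only [sub_apply, smul_apply, smul_eq_mul, hfv, mul_zero, sub_zero, r,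
      div_mul_cancel₀ _ hfw.ne]
    ring
  simp only [sub_apply, smul_apply, smul_eq_mul, hfv, mul_zero, sub_zero]
  rcases lt_or_ge (f x) 0 with hfx | hfx
  · have hxD : x ∈ {x ∈ V | f x < 0} := Finset.mem_filter.2 ⟨hx, hfx⟩
    have hlt : r w < r x :=
      (hwmin x hxD).lt_of_ne fun h => hxw (hinj (by simpa using hxD) (by simpa using hwD) h.symm)
    rw [lt_div_iff_of_neg hfx] at hlt
    linarith
  · linarith [hl x hx hxv, mul_nonneg hrw.le hfx]

lemma toExposed_eq_segment {P : Set E} (hPc : IsCompact P) (hPv : Convex ℝ P) {L : StrongDual ℝ E}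
    {v w : E} (hv : v ∈ P) (hw : w ∈ P) (hLw : L w = L v) (hmax : ∀ x ∈ P, L x ≤ L v)
    (hext : ∀ x ∈ P.extremePoints ℝ, x ≠ v → x ≠ w → L x < L v) :
    L.toExposed P = segment ℝ v w := by
  have hF : IsExposed ℝ P (L.toExposed P) := ContinuousLinearMap.toExposed.isExposed
  have hvF : v ∈ L.toExposed P := ⟨hv, hmax⟩
  have hwF : w ∈ L.toExposed P := ⟨hw, hLw ▸ hmax⟩
  refine (Subset.antisymm ?_ ((hF.convex hPv).segment_subset hvF hwF))
  have hext' : (L.toExposed P).extremePoints ℝ ⊆ {v, w} := by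
    intro x hx
    have hxF := hx.1
    have hxP := hF.isExtreme.extremePoints_subset_extremePoints hx
    by_contra hxvw
    simp only [mem_insert_iff, mem_singleton_iff, not_or] at hxvw
    exact (hext x hxP hxvw.1 hxvw.2).not_ge (hxF.2 v hv)
  rw [← closure_convexHull_extremePoints (hF.isCompact hPc) (hF.convex hPv), ← convexHull_pair]
  exact closure_minimal (convexHull_mono hext') ((toFinite _).isClosed_convexHull ℝ)

lemma exists_apply_neg_of_zero_mem_interior {P : Set E} (h0 : (0 : E) ∈ interior P)
    {f : StrongDual ℝ E} (hf : f ≠ 0) : ∃ p ∈ P, f p < 0 := by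
  obtain ⟨u, hu⟩ : ∃ u, f u < 0 := by
    obtain ⟨u, hu⟩ := DFunLike.ne_iff.1 hf
    rcases hu.lt_or_gt with hu | hu
    · exact ⟨u, hu⟩
    · exact ⟨-u, by simpa using hu⟩
  have hsmul : Tendsto (fun t : ℝ => t • u) (𝓝[>] 0) (𝓝 0) := by
    have hcont : Continuous fun t : ℝ => t • u := by fun_prop
    simpa using (hcont.tendsto 0).mono_left nhdsWithin_le_nhds
  obtain ⟨t, htP, ht⟩ :=
    ((hsmul.eventually (mem_interior_iff_mem_nhds.1 h0)).and self_mem_nhdsWithin).exists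
  exact ⟨t • u, htP, by simpa using mul_neg_of_pos_of_neg ht hu⟩

theorem exists_isExposed_segment_apply_neg {P : Set E} (hPc : IsCompact P) (hPv : Convex ℝ P)
    (hfin : (P.extremePoints ℝ).Finite) {v : E} (hv : v ∈ P.exposedPoints ℝ)
    {f : StrongDual ℝ E} (hfv : f v = 0) {p : E} (hp : p ∈ P) (hfp : f p < 0) :
    ∃ w, IsExposed ℝ P (segment ℝ v w) ∧ w ≠ v ∧ f w < 0 := by
  set V := hfin.toFinset
  have hVP : ↑V ⊆ P.extremePoints ℝ := by simp [V]
  have hPV : P = convexHull ℝ ↑V := by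
    rw [hfin.coe_toFinset, ← (hfin.isClosed_convexHull ℝ).closure_eq,
      closure_convexHull_extremePoints hPc hPv]
  obtain ⟨hvP, l₀, hl₀⟩ := hv
  have hl₀V : ∀ x ∈ V, x ≠ v → l₀ x < l₀ v := fun x hx hxv =>
    have hxP := (hVP hx).1
    (hl₀ x hxP).1.lt_of_not_ge fun h => hxv ((hl₀ x hxP).2 h)
  obtain ⟨l, hl, hinj⟩ := exists_strict_exposing_injOn V hVP hvP hl₀V f
  have hD : ∃ x ∈ V, f x < 0 := by
    obtain ⟨x, hx, hfx⟩ := ((f : E →ₗ[ℝ] ℝ).concaveOn convex_univ).exists_le_of_mem_convexHull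
      (subset_univ _) (hPV ▸ hp)
    exact ⟨x, hx, hfx.trans_lt hfp⟩
  obtain ⟨w, hwV, hfw, L, hLw, hLlt⟩ := exists_rotated_functional V hl hfv hD hinj
  have hmax : ∀ x ∈ P, L x ≤ L v := by
    intro x hx
    obtain ⟨y, hy, hxy⟩ := ((L : E →ₗ[ℝ] ℝ).convexOn convex_univ).exists_ge_of_mem_convexHull
      (subset_univ _) (hPV ▸ hx)
    refine hxy.trans ?_
    by_cases hyv : y = v
    · exact (congrArg L hyv).le
    by_cases hyw : y = w
    · exact (congrArg L hyw).trans_le hLw.le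
    exact (hLlt y hy hyv hyw).le
  have hseg := toExposed_eq_segment hPc hPv hvP (hVP hwV).1 hLw hmax
    fun x hx => hLlt x (by simpa [V] using hx)
  exact ⟨w, hseg ▸ ContinuousLinearMap.toExposed.isExposed, fun h => hfw.ne (h ▸ hfv), hfw⟩

theorem reflexive_vertex_edge_into_halfspace_general {d : ℕ}
    (F : Finset (Fin d → ℤ)) (P : Set (Fin d → ℝ))
    (hP : P = convexHull ℝ ((fun z : Fin d → ℤ => fun i => (z i : ℝ)) '' ↑F))
    (h0 : (0 : Fin d → ℝ) ∈ interior P)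
    (v : Fin d → ℝ) (hv : IsExposed ℝ P {v})
    (mh : Fin d → ℝ) (hm : mh ≠ 0) (hmv : ∑ i, mh i * v i = 0) :
    ∃ w : Fin d → ℝ, ∃ E : Set (Fin d → ℝ),
      IsExposed ℝ P E ∧ E = segment ℝ v w ∧ w ≠ v ∧ ∑ i, mh i * w i < 0 := by
  set f : StrongDual ℝ (Fin d → ℝ) := ∑ i, mh i • ContinuousLinearMap.proj i
  have hf (x : Fin d → ℝ) : f x = ∑ i, mh i * x i := by simp [f]
  have hF : ((fun z : Fin d → ℤ => fun i => (z i : ℝ)) '' ↑F).Finite := F.finite_toSet.image _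
  have hfin : (P.extremePoints ℝ).Finite := hF.subset (hP ▸ extremePoints_convexHull_subset)
  have hf0 : f ≠ 0 := fun h => hm <| dotProduct_self_eq_zero (R := ℝ) |>.1 <| by
    simpa [hf, dotProduct] using DFunLike.congr_fun h mh
  obtain ⟨p, hp, hfp⟩ := exists_apply_neg_of_zero_mem_interior h0 hf0
  have hPc : IsCompact P := hP ▸ hF.isCompact_convexHull (𝕜 := ℝ)
  have hPv : Convex ℝ P := hP ▸ convex_convexHull ℝ _
  obtain ⟨w, hw, hwv, hfw⟩ := exists_isExposed_segment_apply_neg hPc hPv hfin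
    (mem_exposedPoints_iff_exposed_singleton.2 hv) (by rwa [hf]) hp hfp
  exact ⟨w, _, hw, rfl, hwv, by rwa [hf] at hfw⟩

/-- Let `P ⊂ ℝ^d` be a reflexive polytope (a lattice polytope with `0` in its interior
whose dual polytope is again a lattice polytope) and `v` a vertex of `P`. For every
nonzero `mh` with `⟨mh, v⟩ = 0` there is an edge of `P` at `v` whose other endpoint `w`
satisfies `⟨mh, w⟩ < 0`, i.e. the edge runs into the open halfspace `⟨mh, ·⟩ < 0`. -/
theorem reflexive_vertex_edge_into_halfspace {d : ℕ}
    (F G : Finset (Fin d → ℤ)) (P : Set (Fin d → ℝ))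
    (hP : P = convexHull ℝ ((fun z : Fin d → ℤ => fun i => (z i : ℝ)) '' ↑F))
    (h0 : (0 : Fin d → ℝ) ∈ interior P)
    (hdual : {m : Fin d → ℝ | ∀ x ∈ P, -1 ≤ ∑ i, m i * x i} =
      convexHull ℝ ((fun z : Fin d → ℤ => fun i => (z i : ℝ)) '' ↑G))
    (v : Fin d → ℝ) (hv : IsExposed ℝ P {v})
    (mh : Fin d → ℝ) (hm : mh ≠ 0) (hmv : ∑ i, mh i * v i = 0) :
    ∃ w : Fin d → ℝ, ∃ E : Set (Fin d → ℝ),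
      IsExposed ℝ P E ∧ E = segment ℝ v w ∧ w ≠ v ∧ ∑ i, mh i * w i < 0 :=
  reflexive_vertex_edge_into_halfspace_general F P hP h0 v hv mh hm hmv
end

section
/- The terminal singularities of a generic Calabi–Yau hypersurface in a toric variety arising from a maximal projective triangulation of a 5-dimensional reflexive polytope are at most cyclic quotient singularities. Specifically, any 4-dimensional simplicial Gorenstein cone of index 1 over a basic (but not elementary) 3-dimensional lattice simplex defines an affine toric variety whose singularity is of the form ℂ⁴/ℤ_c for some c ≥ 1. -/
open Finset


private lemma tors_card_le {G : Type*} [AddCommGroup G] [Fintype G] [DecidableEq G]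
    (hp : ∀ p : ℕ, p.Prime → #(filter (fun a : G => p • a = 0) univ) ≤ p) :
    ∀ n : ℕ, 0 < n → #(filter (fun a : G => n • a = 0) univ) ≤ n := by
  intro n
  induction n using Nat.strong_induction_on with
  | _ n ih =>
    intro hn
    rcases eq_or_ne n 1 with rfl | hn1
    · have h1 : filter (fun a : G => a = 0) univ = {0} := by
        ext a; simp
      simp only [one_smul]
      simp [h1]
    · set p := n.minFac with hpdef
      have hpp : p.Prime := Nat.minFac_prime hn1
      obtain ⟨m, hm⟩ : p ∣ n := Nat.minFac_dvd n
      have hm0 : 0 < m := by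
        rcases Nat.eq_zero_or_pos m with h | h
        · simp [h] at hm; omega
        · exact h
      have hmlt : m < n := by
        have := hpp.two_le
        calc m < p * m := by nlinarith
          _ = n := hm.symm
      have himg : image (fun a : G => m • a) (filter (fun a : G => n • a = 0) univ)
          ⊆ filter (fun a : G => p • a = 0) univ := by
        intro b hb
        simp only [mem_image, mem_filter, mem_univ, true_and] at hb ⊢
        obtain ⟨a, ha, rfl⟩ := hb
        rw [smul_smul, ← hm, ha]
      have hfib : ∀ b ∈ image (fun a : G => m • a) (filter (fun a : G => n • a = 0) univ),
          #(filter (fun a => (fun a : G => m • a) a = b) (filter (fun a : G => n • a = 0) univ)) ≤ m := by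
        intro b hb
        obtain ⟨a₀, ha₀, ha₀b⟩ := mem_image.1 hb
        refine le_trans (Finset.card_le_card_of_injOn (fun a => a - a₀) ?_ ?_) (ih m hmlt hm0)
        · intro a ha
          simp only [mem_filter, mem_univ, true_and, mem_coe] at ha ⊢
          rw [smul_sub, ha.2, ha₀b, sub_self]
        · intro x _ y _ h
          exact sub_left_injective h
      calc #(filter (fun a : G => n • a = 0) univ)
          ≤ m * #(image (fun a : G => m • a) (filter (fun a : G => n • a = 0) univ)) :=
            Finset.card_le_mul_card_image _ m hfib
        _ ≤ m * p := Nat.mul_le_mul_left m ((card_le_card himg).trans (hp p hpp))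
        _ = n := by rw [hm, mul_comm]


section geom
variable {n : Fin 4 → Fin 4 → ℤ} {m : Fin 4 → ℤ} {p : ℕ}

private lemma aux_coord [NeZero p] {ν : Fin 4 → ZMod p}
    (hν : ∀ i, ∑ k, ν k * ((n k i : ℤ) : ZMod p) = 0) (i : Fin 4) :
    (p : ℤ) ∣ ∑ k, ((ν k).val : ℤ) * n k i := by
  rw [← ZMod.intCast_zmod_eq_zero_iff_dvd]
  push_cast
  rw [← hν i]
  refine Finset.sum_congr rfl fun k _ => ?_
  simp [ZMod.natCast_val, ZMod.cast_id]

private lemma aux_height [NeZero p] (hgor : ∀ k, ∑ i, m i * n k i = 1)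
    {ν : Fin 4 → ZMod p}
    (hν : ∀ i, ∑ k, ν k * ((n k i : ℤ) : ZMod p) = 0) :
    (p : ℤ) ∣ ∑ k, ((ν k).val : ℤ) := by
  have key : (∑ k, ((ν k).val : ℤ)) = ∑ i, m i * ∑ k, ((ν k).val : ℤ) * n k i := by
    calc (∑ k, ((ν k).val : ℤ)) = ∑ k, ((ν k).val : ℤ) * ∑ i, m i * n k i := by
          simp [hgor]
      _ = ∑ k, ∑ i, ((ν k).val : ℤ) * (m i * n k i) := by
          refine Finset.sum_congr rfl fun k _ => ?_
          rw [Finset.mul_sum]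
      _ = ∑ i, ∑ k, ((ν k).val : ℤ) * (m i * n k i) := Finset.sum_comm
      _ = ∑ i, m i * ∑ k, ((ν k).val : ℤ) * n k i := by
          refine Finset.sum_congr rfl fun i _ => ?_
          rw [Finset.mul_sum]
          exact Finset.sum_congr rfl fun k _ => by ring
  rw [key]
  exact Finset.dvd_sum fun i _ => (aux_coord hν i).mul_left (m i)

private lemma aux_ne_p [NeZero p]
    (hli : LinearIndependent ℚ fun k => fun i => ((n k i : ℚ)))
    (hbasic : ∀ z : Fin 4 → ℤ,
      (fun i => (z i : ℝ)) ∈ convexHull ℝ (Set.range fun k => fun i => ((n k i : ℝ))) →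
      ∃ k, z = n k)
    {ν : Fin 4 → ZMod p}
    (hν : ∀ i, ∑ k, ν k * ((n k i : ℤ) : ZMod p) = 0) :
    (∑ k, (ν k).val) ≠ p := by
  intro hS
  have hp0 : (0:ℝ) < p := by exact_mod_cast Nat.pos_of_ne_zero (NeZero.ne p)
  set z : Fin 4 → ℤ := fun i => (∑ k, ((ν k).val : ℤ) * n k i) / p with hzdef
  have hz : ∀ i, (p : ℤ) * z i = ∑ k, ((ν k).val : ℤ) * n k i := fun i =>
    Int.mul_ediv_cancel' (aux_coord hν i)
  have hmem : (fun i => (z i : ℝ)) ∈ convexHull ℝ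
      (Set.range fun k => fun i => ((n k i : ℝ))) := by
    have h1 : ∑ k, (((ν k).val : ℝ))/p = 1 := by
      rw [← Finset.sum_div]
      rw [div_eq_one_iff_eq (ne_of_gt hp0)]
      exact_mod_cast congrArg (Nat.cast : ℕ → ℝ) hS
    have := Finset.centerMass_mem_convexHull (Finset.univ : Finset (Fin 4))
      (w := fun k => (((ν k).val : ℝ))/p)
      (fun k _ => by positivity) (by rw [h1]; norm_num)
      (z := fun k => fun i => ((n k i : ℝ))) (fun k _ => Set.mem_range_self k)
    rwa [Finset.centerMass_eq_of_sum_1 _ _ h1, show (∑ k, ((((ν k).val : ℝ))/p) •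
        (fun i => ((n k i : ℝ)))) = fun i => (z i : ℝ) from ?_] at this
    funext i
    rw [Finset.sum_apply]
    have hzi : (p:ℝ) * (z i : ℝ) = ∑ k, (((ν k).val : ℝ)) * n k i := by
      exact_mod_cast congrArg (Int.cast : ℤ → ℝ) (hz i)
    have : (z i : ℝ) = (∑ k, (((ν k).val : ℝ)) * n k i) / p := by
      field_simp at hzi ⊢; linarith [hzi]
    rw [this, Finset.sum_div]
    exact Finset.sum_congr rfl fun k _ => by simp [Pi.smul_apply]; ring
  obtain ⟨j, hj⟩ := hbasic z hmem
  have hint : ∀ i, ∑ k, ((ν k).val : ℤ) * n k i = p * n j i := by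
    intro i; rw [← hz i, hj]
  have hlin := Fintype.linearIndependent_iff.mp hli
    (fun k => ((ν k).val : ℚ) - p * (if k = j then 1 else 0))
  have h0 : ∑ k, (((ν k).val : ℚ) - p * (if k = j then 1 else 0)) •
      (fun i => ((n k i : ℚ))) = 0 := by
    funext i
    rw [Finset.sum_apply]
    have : (∑ k, ((ν k).val : ℚ) * n k i) = p * n j i := by
      exact_mod_cast congrArg (Int.cast : ℤ → ℚ) (hint i)
    simp only [Pi.smul_apply, smul_eq_mul, sub_mul, Finset.sum_sub_distrib, this,
      Pi.zero_apply]
    rw [Finset.sum_eq_single j]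
    · simp
    · intro k _ hk; simp [hk]
    · simp
  have := hlin h0 j
  simp only [if_pos rfl, mul_one, sub_eq_zero, if_true] at this
  have hvj : ((ν j).val : ℚ) = p := by simpa using this
  have : (ν j).val = p := by exact_mod_cast hvj
  exact absurd this (ne_of_lt (ZMod.val_lt _))

end geom


section geom2
variable {n : Fin 4 → Fin 4 → ℤ} {m : Fin 4 → ℤ} {p : ℕ}


private lemma aux_ge [NeZero p]
    (hli : LinearIndependent ℚ fun k => fun i => ((n k i : ℚ)))
    (hgor : ∀ k, ∑ i, m i * n k i = 1)
    (hbasic : ∀ z : Fin 4 → ℤ,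
      (fun i => (z i : ℝ)) ∈ convexHull ℝ (Set.range fun k => fun i => ((n k i : ℝ))) →
      ∃ k, z = n k)
    {ν : Fin 4 → ZMod p} (hν0 : ν ≠ 0)
    (hν : ∀ i, ∑ k, ν k * ((n k i : ℤ) : ZMod p) = 0) :
    2 * p ≤ ∑ k, (ν k).val := by
  have hdvd : p ∣ ∑ k, (ν k).val := by
    have := aux_height hgor hν
    exact_mod_cast this
  have hne0 : (∑ k, (ν k).val) ≠ 0 := by
    intro h
    apply hν0
    funext k
    have : (ν k).val = 0 := by
      have := Finset.sum_eq_zero_iff.mp h k (mem_univ k)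
      exact this
    simpa [ZMod.val_eq_zero] using this
  have hnep : (∑ k, (ν k).val) ≠ p := aux_ne_p hli hbasic hν
  obtain ⟨t, ht⟩ := hdvd
  have hp0 : 0 < p := Nat.pos_of_ne_zero (NeZero.ne p)
  have ht2 : 2 ≤ t := by
    rcases t with _ | _ | t
    · simp [ht] at hne0
    · simp [ht] at hnep
    · omega
  calc 2 * p = p * 2 := by ring
    _ ≤ p * t := Nat.mul_le_mul_left p ht2
    _ = _ := ht.symm

private lemma claim1 [NeZero p]
    (hli : LinearIndependent ℚ fun k => fun i => ((n k i : ℚ)))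
    (hgor : ∀ k, ∑ i, m i * n k i = 1)
    (hbasic : ∀ z : Fin 4 → ℤ,
      (fun i => (z i : ℝ)) ∈ convexHull ℝ (Set.range fun k => fun i => ((n k i : ℝ))) →
      ∃ k, z = n k)
    {ν : Fin 4 → ZMod p} (hν0 : ν ≠ 0)
    (hν : ∀ i, ∑ k, ν k * ((n k i : ℤ) : ZMod p) = 0) :
    (∀ k, ν k ≠ 0) ∧ (∑ k, (ν k).val) = 2 * p := by
  have hp0 : 0 < p := Nat.pos_of_ne_zero (NeZero.ne p)
  have hνneg : ∀ i, ∑ k, (-ν) k * ((n k i : ℤ) : ZMod p) = 0 := by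
    intro i
    simp only [Pi.neg_apply, neg_mul]
    rw [Finset.sum_neg_distrib, hν i, neg_zero]
  have hνneg0 : (-ν) ≠ 0 := by simpa [neg_eq_zero] using hν0
  have hS := aux_ge hli hgor hbasic hν0 hν
  have hT := aux_ge hli hgor hbasic hνneg0 hνneg
  have hterm : ∀ k, (ν k).val + ((-ν) k).val ≤ p := by
    intro k
    simp only [Pi.neg_apply, ZMod.neg_val]
    split
    · next h => simp [h, ZMod.val_zero]
    · have := (ZMod.val_lt (ν k)).le
      omega
  have hsum_le : (∑ k, (ν k).val) + (∑ k, ((-ν) k).val) ≤ 4 * p := by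
    rw [← Finset.sum_add_distrib]
    calc (∑ k, ((ν k).val + ((-ν) k).val)) ≤ ∑ _k : Fin 4, p :=
          Finset.sum_le_sum fun k _ => hterm k
      _ = 4 * p := by simp [Finset.sum_const]
  have hSeq : (∑ k, (ν k).val) = 2 * p := by omega
  refine ⟨?_, hSeq⟩
  intro k hk
  -- if ν k = 0 then the k-th term is 0, so the total sum < 4p
  have hterm0 : (ν k).val + ((-ν) k).val = 0 := by
    simp [hk, ZMod.val_zero]
  have hlt : (∑ j, ((ν j).val + ((-ν) j).val)) ≤ 3 * p := by
    rw [← Finset.sum_erase_add _ _ (mem_univ k), hterm0, add_zero]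
    calc (∑ j ∈ univ.erase k, ((ν j).val + ((-ν) j).val))
        ≤ ∑ _j ∈ univ.erase k, p := Finset.sum_le_sum fun j _ => hterm j
      _ = 3 * p := by
          rw [Finset.sum_const, Finset.card_erase_of_mem (mem_univ k)]
          simp [Finset.card_univ]
  rw [Finset.sum_add_distrib] at hlt
  omega

end geom2


section geom3
variable {n : Fin 4 → Fin 4 → ℤ} {m : Fin 4 → ℤ} {p : ℕ}

private lemma keyline (hp : p.Prime)
    (hli : LinearIndependent ℚ fun k => fun i => ((n k i : ℚ)))
    (hgor : ∀ k, ∑ i, m i * n k i = 1)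
    (hbasic : ∀ z : Fin 4 → ℤ,
      (fun i => (z i : ℝ)) ∈ convexHull ℝ (Set.range fun k => fun i => ((n k i : ℝ))) →
      ∃ k, z = n k)
    {lam mu : Fin 4 → ZMod p} (hlam0 : lam ≠ 0)
    (hlam : ∀ i, ∑ k, lam k * ((n k i : ℤ) : ZMod p) = 0)
    (hmu : ∀ i, ∑ k, mu k * ((n k i : ℤ) : ZMod p) = 0) :
    ∃ c : ZMod p, mu = c • lam := by
  haveI : Fact p.Prime := ⟨hp⟩
  haveI : NeZero p := ⟨hp.pos.ne'⟩
  by_contra hc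
  push_neg at hc
  have hlamfull := (claim1 hli hgor hbasic hlam0 hlam).1
  have hνt : ∀ t : ZMod p, ∀ i, ∑ k, (mu + t • lam) k * ((n k i : ℤ) : ZMod p) = 0 := by
    intro t i
    simp only [Pi.add_apply, Pi.smul_apply, smul_eq_mul, add_mul,
      Finset.sum_add_distrib, hmu i, mul_assoc, ← Finset.mul_sum, hlam i,
      mul_zero, add_zero]
  have hνt0 : ∀ t : ZMod p, mu + t • lam ≠ 0 := by
    intro t h
    apply hc (-t)
    funext k
    have := congrFun h k
    simp only [Pi.add_apply, Pi.smul_apply, smul_eq_mul, Pi.zero_apply] at this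
    simp only [Pi.smul_apply, smul_eq_mul, neg_mul]
    linear_combination this
  have hSt : ∀ t : ZMod p, ∑ k, ((mu + t • lam) k).val = 2 * p := fun t =>
    (claim1 hli hgor hbasic (hνt0 t) (hνt t)).2
  have htot : ∑ t : ZMod p, ∑ k, ((mu + t • lam) k).val = 2 * p * p := by
    rw [Finset.sum_congr rfl fun t _ => hSt t]
    simp [Finset.card_univ, ZMod.card]
    ring
  rw [Finset.sum_comm] at htot
  have hin : ∀ k, ∑ t : ZMod p, ((mu + t • lam) k).val = ∑ a : ZMod p, a.val := by
    intro k
    have := Equiv.sum_comp ((Equiv.mulRight₀ (lam k) (hlamfull k)).trans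
      (Equiv.addLeft (mu k))) (ZMod.val (n := p))
    rw [← this]
    refine Finset.sum_congr rfl fun t _ => ?_
    simp [Equiv.trans_apply]
  rw [Finset.sum_congr rfl fun k _ => hin k] at htot
  have hvalsum : ∑ a : ZMod p, a.val = ∑ i ∈ range p, i := by
    refine Finset.sum_bij (fun a _ => a.val) ?_ ?_ ?_ ?_
    · intro a _; exact mem_range.mpr (ZMod.val_lt a)
    · intro a _ b _ h; exact ZMod.val_injective p h
    · intro b hb; exact ⟨(b : ZMod p), mem_univ _, ZMod.val_cast_of_lt (mem_range.mp hb)⟩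
    · intro a _; rfl
  rw [hvalsum] at htot
  simp only [Finset.sum_const, Finset.card_univ, Fintype.card_fin, smul_eq_mul] at htot
  -- htot : 4 * (∑ i in range p, i) = 2 * p * p
  have hgauss := Finset.sum_range_id_mul_two p
  have e1 : 2 * (p * p) = 2 * (p * (p - 1)) := by
    calc 2 * (p * p) = 2 * p * p := by ring
      _ = 4 * ∑ i ∈ range p, i := htot.symm
      _ = 2 * ((∑ i ∈ range p, i) * 2) := by ring
      _ = 2 * (p * (p - 1)) := by rw [hgauss]
  have e2 : p * p = p * (p - 1) := Nat.eq_of_mul_eq_mul_left (by norm_num) e1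
  have e3 : p = p - 1 := Nat.eq_of_mul_eq_mul_left hp.pos e2
  have := hp.two_le
  omega

end geom3


/-- Terminal singularities of generic four-dimensional toric Calabi-Yau hypersurfaces
are at most cyclic quotient singularities: if a 4-dimensional simplicial Gorenstein cone
of index 1 is generated by `n₁, …, n₄ ∈ ℤ⁴` (linearly independent, with a primitive
`m ∈ M` pairing to `1` with each `nᵢ`) over a basic 3-dimensional lattice simplex
(its only lattice points are its vertices), then the quotient `ℤ⁴ / ⟨n₁, …, n₄⟩` is
cyclic, i.e. isomorphic to `ℤ/c` for some `c ≥ 1`; the corresponding affine toric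
variety is the cyclic quotient `ℂ⁴/ℤ_c`. -/
theorem terminal_singularities_are_cyclic_quotients
    (n : Fin 4 → Fin 4 → ℤ) (m : Fin 4 → ℤ)
    (hli : LinearIndependent ℚ fun k => fun i => ((n k i : ℚ)))
    (hprim : Finset.univ.gcd m = 1)
    (hgor : ∀ k, ∑ i, m i * n k i = 1)
    (hbasic : ∀ z : Fin 4 → ℤ,
      (fun i => (z i : ℝ)) ∈ convexHull ℝ (Set.range fun k => fun i => ((n k i : ℝ))) →
      ∃ k, z = n k) :
    ∃ c : ℕ, 1 ≤ c ∧
      (∃ x : (Fin 4 → ℤ) ⧸ Submodule.span ℤ (Set.range n),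
        ∀ y, ∃ t : ℤ, t • x = y) ∧
      Nonempty (((Fin 4 → ℤ) ⧸ Submodule.span ℤ (Set.range n)) ≃+ ZMod c) := by
  classical
  -- the quotient
  set Q := (Fin 4 → ℤ) ⧸ Submodule.span ℤ (Set.range n) with hQ
  -- Step 1 : the n k span ℚ⁴
  have hspan : Submodule.span ℚ (Set.range fun k => fun i => ((n k i : ℚ))) = ⊤ :=
    hli.span_eq_top_of_card_eq_finrank (by simp)
  -- Step 2 : Q is torsion
  have htor : ∀ x : Q, ∃ d : ℕ, 0 < d ∧ (d : ℤ) • x = 0 := by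
    intro x
    obtain ⟨z, hz⟩ := Submodule.Quotient.mk_surjective _ x
    have hzmem : (fun i => (z i : ℚ)) ∈ Submodule.span ℚ
        (Set.range fun k => fun i => ((n k i : ℚ))) := by
      rw [hspan]; trivial
    obtain ⟨c, hc⟩ := (Submodule.mem_span_range_iff_exists_fun ℚ).mp hzmem
    set d : ℕ := ∏ k, (c k).den with hd
    have hd0 : 0 < d := Finset.prod_pos fun k _ => (c k).pos
    refine ⟨d, hd0, ?_⟩
    -- integer coefficients
    have hden : ∀ k, ∃ e : ℤ, (d : ℤ) = ((c k).den : ℤ) * e := by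
      intro k
      obtain ⟨e, he⟩ := Finset.dvd_prod_of_mem (fun k => ((c k).den : ℤ))
        (mem_univ k)
      exact ⟨e, by simpa [hd] using he⟩
    choose e he using hden
    set a : Fin 4 → ℤ := fun k => (c k).num * e k with ha
    have hcast : ∀ k, ((a k : ℤ) : ℚ) = c k * d := by
      intro k
      have hden0 : (((c k).den : ℤ) : ℚ) ≠ 0 := by
        exact_mod_cast (Nat.cast_ne_zero (R := ℚ)).mpr (c k).den_nz
      have hnum : ((c k).num : ℚ) = c k * ((c k).den : ℚ) := by
        have h := Rat.num_div_den (c k)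
        rw [div_eq_iff (show ((c k).den : ℚ) ≠ 0 from Nat.cast_ne_zero.mpr (c k).den_nz)] at h
        exact h
      have : ((d : ℤ) : ℚ) = ((c k).den : ℚ) * (e k : ℚ) := by
        exact_mod_cast congrArg (Int.cast : ℤ → ℚ) (he k)
      push_cast [ha]
      rw [hnum]
      push_cast at this
      rw [this]; ring
    have hkey : ∀ i, ∑ k, a k * n k i = d * z i := by
      intro i
      have hci := congrFun hc i
      rw [Finset.sum_apply] at hci
      have hzi : ∑ k, c k * (n k i : ℚ) = (z i : ℚ) := by
        simpa [smul_eq_mul] using hci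
      have : ∑ k, (c k * d) * (n k i : ℚ) = (z i : ℚ) * d := by
        calc ∑ k, (c k * d) * (n k i : ℚ) = (∑ k, c k * (n k i : ℚ)) * d := by
              rw [Finset.sum_mul]
              exact Finset.sum_congr rfl fun k _ => by ring
          _ = (z i : ℚ) * d := by rw [hzi]
      have h2 : ∑ k, ((a k : ℤ) : ℚ) * (n k i : ℚ) = (z i : ℚ) * d := by
        rw [← this]
        exact Finset.sum_congr rfl fun k _ => by rw [hcast k]
      have h3 : ((∑ k, a k * n k i : ℤ) : ℚ) = (((d : ℤ) * z i : ℤ) : ℚ) := by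
        push_cast
        rw [h2]; ring
      exact_mod_cast h3
    -- now conclude
    have hmem : (d : ℤ) • z ∈ Submodule.span ℤ (Set.range n) := by
      rw [Submodule.mem_span_range_iff_exists_fun ℤ]
      refine ⟨a, funext fun i => ?_⟩
      rw [Finset.sum_apply]
      simpa [smul_eq_mul] using hkey i
    rw [← hz, ← Submodule.Quotient.mk_smul, Submodule.Quotient.mk_eq_zero]
    exact hmem
  -- Step 3 : Q is finite
  haveI : Module.Finite ℤ Q := Module.Finite.quotient ℤ _
  have htors : Module.IsTorsion ℤ Q := by
    intro x
    obtain ⟨d, hd0, hdx⟩ := htor x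
    exact ⟨⟨(d : ℤ), mem_nonZeroDivisors_of_ne_zero (by exact_mod_cast hd0.ne')⟩, hdx⟩
  haveI : Finite Q := Module.finite_of_fg_torsion Q htors
  haveI : Fintype Q := Fintype.ofFinite Q
  -- Step 4 : prime torsion bound
  have hpbound : ∀ p : ℕ, p.Prime → #(filter (fun a : Q => p • a = 0) univ) ≤ p := by
    intro p hp
    haveI : Fact p.Prime := ⟨hp⟩
    haveI : NeZero p := ⟨hp.pos.ne'⟩
    set s := filter (fun a : Q => p • a = 0) univ with hs
    have hex : ∀ x : {x : Q // x ∈ s}, ∃ za : (Fin 4 → ℤ) × (Fin 4 → ℤ),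
        Submodule.Quotient.mk za.1 = x.1 ∧ ∀ i, ∑ k, za.2 k * n k i = p * za.1 i := by
      rintro ⟨x, hx⟩
      obtain ⟨z, hz⟩ := Submodule.Quotient.mk_surjective _ x
      have hps : p • x = 0 := (mem_filter.mp hx).2
      have hmem : (p : ℤ) • z ∈ Submodule.span ℤ (Set.range n) := by
        rw [← Submodule.Quotient.mk_eq_zero, Submodule.Quotient.mk_smul, hz,
          natCast_zsmul, hps]
      obtain ⟨a, haz⟩ := (Submodule.mem_span_range_iff_exists_fun ℤ).mp hmem
      refine ⟨(z, a), hz, fun i => ?_⟩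
      have := congrFun haz i
      rw [Finset.sum_apply] at this
      simpa [smul_eq_mul] using this
    choose za hza1 hza2 using hex
    set lam : {x : Q // x ∈ s} → Fin 4 → ZMod p :=
      fun x k => (((za x).2 k : ℤ) : ZMod p) with hlamdef
    have hlamV : ∀ x, ∀ i, ∑ k, lam x k * ((n k i : ℤ) : ZMod p) = 0 := by
      intro x i
      have h1 : ((∑ k, (za x).2 k * n k i : ℤ) : ZMod p)
          = (((p : ℤ) * (za x).1 i : ℤ) : ZMod p) := by rw [hza2 x i]
      push_cast at h1
      rw [ZMod.natCast_self] at h1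
      simpa [hlamdef] using h1
    have hinj : ∀ x y, lam x = lam y → x = y := by
      intro x y h
      have hd : ∀ k, (p : ℤ) ∣ ((za x).2 k - (za y).2 k) := by
        intro k
        rw [← ZMod.intCast_zmod_eq_zero_iff_dvd]
        push_cast
        have := congrFun h k
        simp only [hlamdef] at this
        rw [this, sub_self]
      choose b hb using hd
      have hzz : ∀ i, (za x).1 i - (za y).1 i = ∑ k, b k * n k i := by
        intro i
        have hx2 := hza2 x i
        have hy2 := hza2 y i
        have hsub : ∑ k, ((za x).2 k - (za y).2 k) * n k i
            = (p : ℤ) * ((za x).1 i - (za y).1 i) := by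
          rw [Finset.sum_congr rfl fun k _ => sub_mul _ _ _, Finset.sum_sub_distrib,
            hx2, hy2]
          ring
        have hsub2 : ∑ k, ((za x).2 k - (za y).2 k) * n k i
            = (p : ℤ) * ∑ k, b k * n k i := by
          rw [Finset.sum_congr rfl fun k _ => by rw [hb k], Finset.mul_sum]
          exact Finset.sum_congr rfl fun k _ => by ring
        have hpz : (p : ℤ) ≠ 0 := by exact_mod_cast hp.pos.ne'
        exact mul_left_cancel₀ hpz (hsub.symm.trans hsub2)
      have hmem : (za x).1 - (za y).1 ∈ Submodule.span ℤ (Set.range n) := by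
        rw [Submodule.mem_span_range_iff_exists_fun ℤ]
        refine ⟨b, funext fun i => ?_⟩
        rw [Finset.sum_apply]
        simpa [smul_eq_mul] using (hzz i).symm
      have : x.1 = y.1 := by
        rw [← hza1 x, ← hza1 y]
        exact (Submodule.Quotient.eq _).mpr hmem
      exact Subtype.ext this
    -- injection into ZMod p
    have hFinj : Function.Injective (fun x => lam x 0) := by
      intro x y h
      apply hinj
      by_cases hV : ∃ ν : Fin 4 → ZMod p, ν ≠ 0 ∧
          ∀ i, ∑ k, ν k * ((n k i : ℤ) : ZMod p) = 0
      · obtain ⟨ν, hν0, hνV⟩ := hV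
        obtain ⟨cx, hcx⟩ := keyline (m := m) hp hli hgor hbasic hν0 hνV (hlamV x)
        obtain ⟨cy, hcy⟩ := keyline (m := m) hp hli hgor hbasic hν0 hνV (hlamV y)
        have hν00 : ν 0 ≠ 0 := (claim1 (m := m) hli hgor hbasic hν0 hνV).1 0
        have hcc : cx = cy := by
          have hx0 := congrFun hcx 0
          have hy0 := congrFun hcy 0
          simp only [Pi.smul_apply, smul_eq_mul] at hx0 hy0
          have : cx * ν 0 = cy * ν 0 := by rw [← hx0, ← hy0]; exact h
          exact mul_right_cancel₀ hν00 this
        rw [hcx, hcy, hcc]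
      · push_neg at hV
        have h1 : lam x = 0 := by
          by_contra h'
          obtain ⟨i, hi⟩ := hV _ h'
          exact hi (hlamV x i)
        have h2 : lam y = 0 := by
          by_contra h'
          obtain ⟨i, hi⟩ := hV _ h'
          exact hi (hlamV y i)
        rw [h1, h2]
    calc #s = Fintype.card {x : Q // x ∈ s} := (Fintype.card_coe s).symm
      _ ≤ Fintype.card (ZMod p) := Fintype.card_le_of_injective _ hFinj
      _ = p := ZMod.card p
  -- Step 5 : cyclic
  haveI hcyc : IsAddCyclic Q :=
    isAddCyclic_of_card_nsmul_eq_zero_le (tors_card_le hpbound)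
  obtain ⟨g, hg⟩ := hcyc.exists_generator
  refine ⟨Nat.card Q, Nat.card_pos, ⟨g, fun y => ?_⟩,
    ⟨(zmodAddCyclicAddEquiv hcyc).symm⟩⟩
  exact AddSubgroup.mem_zmultiples_iff.mp (hg y)
end
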